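/- arXiv:2505.01858 — 7 statements merged into one kernel-verified Lean document; each statement's English description precedes it below -/
import Mathlib

section
/- Let T > 0, let G : Δ_T → ℝ be continuous with G(s,t) ≥ 0 for all (s,t) ∈ Δ_T, and let H : [0,T] → ℝ be continuous with H(t) > 0 for all t ∈ [0,T]. Then there exists exactly one continuous function f : [0,T] → ℝ satisfying the backward Volterra equation f(t) = ∫_t^T G(s,t) f(s) ds + H(t) for all t ∈ [0,T], and moreover this fixed point satisfies f(t) > 0 for all t ∈ [0,T]. -/
/-! With `M` a bound for `|G|` on the triangle, the `n`-th iterate of the Volterra map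
`f ↦ ∫_t^T G(s, t) f(s) ds + H(t)` on `C([0, T])` is Lipschitz with constant `(M T)ⁿ / n!`, so
some iterate is a contraction and the map has a unique fixed point. Since `G ≥ 0` and `H > 0`
the map preserves the closed cone of nonnegative functions, which therefore contains the fixed
point (a limit of iterates), and then `f = ∫ G f + H > 0`. `G` is first extended continuously
from the triangle to the plane, so that parametric integrals of it are continuous. -/

open MeasureTheory intervalIntegral Set

open Function

theorem ContractingWith.fixedPoint_mem_of_mapsTo {α : Type*} [MetricSpace α] [Nonempty α]
    [CompleteSpace α] {K : NNReal} {f : α → α} (hf : ContractingWith K f) {s : Set α}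
    (hs : IsClosed s) (hfs : MapsTo f s s) {x : α} (hx : x ∈ s) : fixedPoint f hf ∈ s :=
  hs.mem_of_tendsto (hf.tendsto_iterate_fixedPoint x)
    (Filter.Eventually.of_forall fun n => hfs.iterate n hx)

theorem ContinuousMap.isClosed_setOf_nonneg {α : Type*} [TopologicalSpace α] :
    IsClosed {f : C(α, ℝ) | 0 ≤ f} := by
  simp only [ContinuousMap.le_def, ofPred_forall]
  exact isClosed_iInter fun u => isClosed_le continuous_const (continuous_eval_const u)

theorem exists_continuous_eq_on_triangle {T : ℝ} (hT : 0 ≤ T) {G : ℝ → ℝ → ℝ}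
    (hG : ContinuousOn (fun p : ℝ × ℝ => G p.1 p.2) {p : ℝ × ℝ | 0 ≤ p.2 ∧ p.2 ≤ p.1 ∧ p.1 ≤ T}) :
    ∃ G' : ℝ → ℝ → ℝ, Continuous (uncurry G') ∧
      ∀ s t, 0 ≤ t → t ≤ s → s ≤ T → G' s t = G s t := by
  -- compose with the retraction `(s, t) ↦ (max (c t) (min s T), c t)` of the plane onto the
  -- triangle, where `c` clamps to `[0, T]`
  let c : ℝ → ℝ := fun t => max 0 (min T t)
  refine ⟨fun s t => G (max (c t) (min s T)) (c t), ?_, fun s t ht hts hsT => ?_⟩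
  · refine hG.comp_continuous (f := fun p : ℝ × ℝ => (max (c p.2) (min p.1 T), c p.2))
      (by fun_prop) fun p => ⟨le_max_left _ _, le_max_left _ _, ?_⟩
    exact max_le (max_le hT (min_le_left _ _)) (min_le_right _ _)
  · simp only [c, min_eq_right (hts.trans hsT), max_eq_right ht, min_eq_left hsT,
      max_eq_right hts]

theorem integral_sub_pow (a b : ℝ) (n : ℕ) :
    ∫ s in a..b, (b - s) ^ n = (b - a) ^ (n + 1) / (n + 1) := by
  simp [integral_comp_sub_left (fun x => x ^ n)]

section VolterraOp

variable {T : ℝ} (hT : 0 ≤ T) {G : ℝ → ℝ → ℝ} (hG : Continuous (uncurry G))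
  (h : C(Icc (0:ℝ) T, ℝ))

noncomputable def volterraOp (f : C(Icc (0:ℝ) T, ℝ)) : C(Icc (0:ℝ) T, ℝ) where
  toFun u := (∫ s in (u:ℝ)..T, G s u * IccExtend hT f s) + h u
  continuous_toFun := by
    have hint : Continuous fun t : ℝ => ∫ s in T..t, G s t * IccExtend hT f s :=
      continuous_parametric_intervalIntegral_of_continuous
        (f := fun t s => G s t * IccExtend hT f s)
        ((hG.comp continuous_swap).mul (f.continuous.Icc_extend'.comp continuous_snd))
        continuous_id
    simp only [integral_symm (a := T)]
    exact (hint.neg.comp continuous_subtype_val).add h.continuous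

theorem volterraOp_apply (f : C(Icc (0:ℝ) T, ℝ)) (u : Icc (0:ℝ) T) :
    volterraOp hT hG h f u = (∫ s in (u:ℝ)..T, G s u * IccExtend hT f s) + h u :=
  rfl

theorem volterraOp_sub_apply (f g : C(Icc (0:ℝ) T, ℝ)) (u : Icc (0:ℝ) T) :
    volterraOp hT hG h f u - volterraOp hT hG h g u
      = ∫ s in (u:ℝ)..T, G s u * (IccExtend hT f s - IccExtend hT g s) := by
  have hint (k : C(Icc (0:ℝ) T, ℝ)) :
      IntervalIntegrable (fun s => G s u * IccExtend hT k s) volume u T :=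
    ((hG.comp (continuous_id.prodMk continuous_const)).mul
      k.continuous.Icc_extend').intervalIntegrable _ _
  simp only [volterraOp_apply, mul_sub, integral_sub (hint f) (hint g)]
  ring

variable {hT hG h} {M : ℝ}

theorem abs_volterraOp_sub_le (hM : ∀ s t, 0 ≤ t → t ≤ s → s ≤ T → |G s t| ≤ M)
    {f g : C(Icc (0:ℝ) T, ℝ)} {b : ℝ → ℝ} (hb : Continuous b)
    (hfg : ∀ v : Icc (0:ℝ) T, |f v - g v| ≤ b v) (u : Icc (0:ℝ) T) :
    |volterraOp hT hG h f u - volterraOp hT hG h g u| ≤ M * ∫ s in (u:ℝ)..T, b s := by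
  have hGu : Continuous fun s => G s u := hG.comp (continuous_id.prodMk continuous_const)
  rw [volterraOp_sub_apply, ← intervalIntegral.integral_const_mul]
  refine (abs_integral_le_integral_abs u.2.2).trans
    (integral_mono_on u.2.2 ?_ ?_ fun s hs => ?_)
  · exact (hGu.mul (f.continuous.Icc_extend'.sub g.continuous.Icc_extend')).abs.intervalIntegrable
      _ _
  · exact (continuous_const.mul hb).intervalIntegrable _ _
  · have hs' : s ∈ Icc (0:ℝ) T := ⟨u.2.1.trans hs.1, hs.2⟩
    rw [abs_mul, IccExtend_of_mem hT _ hs', IccExtend_of_mem hT _ hs']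
    have hGsu := hM s u u.2.1 hs.1 hs.2
    exact mul_le_mul hGsu (hfg _) (abs_nonneg _) ((abs_nonneg _).trans hGsu)

theorem abs_volterraOp_iterate_sub_le (hM : ∀ s t, 0 ≤ t → t ≤ s → s ≤ T → |G s t| ≤ M)
    (n : ℕ) (f g : C(Icc (0:ℝ) T, ℝ)) (u : Icc (0:ℝ) T) :
    |(volterraOp hT hG h)^[n] f u - (volterraOp hT hG h)^[n] g u|
      ≤ (M * (T - u)) ^ n / n.factorial * dist f g := by
  induction n generalizing u with
  | zero => simpa [← Real.dist_eq] using ContinuousMap.dist_apply_le_dist (f := f) (g := g) u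
  | succ n ih =>
    rw [iterate_succ_apply', iterate_succ_apply']
    refine (abs_volterraOp_sub_le hM
      (b := fun s => (M * (T - s)) ^ n / n.factorial * dist f g) (by fun_prop) ih u).trans_eq ?_
    have hfactor (s : ℝ) : (M * (T - s)) ^ n / n.factorial * dist f g
        = M ^ n / n.factorial * dist f g * (T - s) ^ n := by rw [mul_pow]; ring
    simp only [hfactor]
    rw [intervalIntegral.integral_const_mul, integral_sub_pow, Nat.factorial_succ, mul_pow]
    push_cast
    field_simp
    ring

variable (hT hG h) in
theorem exists_contractingWith_iterate_volterraOp :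
    ∃ (n : ℕ) (K : NNReal), ContractingWith K (volterraOp hT hG h)^[n] := by
  obtain ⟨C, hC⟩ := (isCompact_Icc.prod isCompact_Icc).exists_bound_of_continuousOn
    (s := Icc 0 T ×ˢ Icc 0 T) hG.continuousOn
  have hM : ∀ s t, 0 ≤ t → t ≤ s → s ≤ T → |G s t| ≤ C := fun s t ht hts hsT =>
    hC (s, t) ⟨⟨ht.trans hts, hsT⟩, ht, hts.trans hsT⟩
  have hC0 : 0 ≤ C := (abs_nonneg _).trans (hM 0 0 le_rfl le_rfl hT)
  obtain ⟨n, hn⟩ := ((FloorSemiring.tendsto_pow_div_factorial_atTop (C * T)).eventually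
    (gt_mem_nhds one_pos)).exists
  refine ⟨n, ⟨(C * T) ^ n / n.factorial,
    div_nonneg (pow_nonneg (mul_nonneg hC0 hT) n) n.factorial.cast_nonneg⟩, hn,
    LipschitzWith.of_dist_le_mul fun f g => ?_⟩
  refine (ContinuousMap.dist_le (mul_nonneg (NNReal.coe_nonneg _) dist_nonneg)).2 fun u => ?_
  rw [Real.dist_eq]
  refine (abs_volterraOp_iterate_sub_le hM n f g u).trans ?_
  show _ ≤ (C * T) ^ n / n.factorial * dist f g
  have hu := u.2
  gcongr
  · exact mul_nonneg hC0 (by linarith [hu.2])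
  · linarith [hu.1]

theorem integral_mul_IccExtend_nonneg (hGnonneg : ∀ s t, 0 ≤ t → t ≤ s → s ≤ T → 0 ≤ G s t)
    {f : C(Icc (0:ℝ) T, ℝ)} (hf : 0 ≤ f) (u : Icc (0:ℝ) T) :
    0 ≤ ∫ s in (u:ℝ)..T, G s u * IccExtend hT f s :=
  integral_nonneg u.2.2 fun s hs => mul_nonneg (hGnonneg s u u.2.1 hs.1 hs.2) (hf _)

theorem mapsTo_volterraOp_nonneg (hGnonneg : ∀ s t, 0 ≤ t → t ≤ s → s ≤ T → 0 ≤ G s t)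
    (hh : 0 ≤ h) : MapsTo (volterraOp hT hG h) {f | 0 ≤ f} {f | 0 ≤ f} := fun _ hf u =>
  add_nonneg (integral_mul_IccExtend_nonneg hGnonneg hf u) (hh u)

theorem volterraOp_pos (hGnonneg : ∀ s t, 0 ≤ t → t ≤ s → s ≤ T → 0 ≤ G s t)
    (hh : ∀ u, 0 < h u) {f : C(Icc (0:ℝ) T, ℝ)} (hf : 0 ≤ f) (u : Icc (0:ℝ) T) :
    0 < volterraOp hT hG h f u :=
  add_pos_of_nonneg_of_pos (integral_mul_IccExtend_nonneg hGnonneg hf u) (hh u)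

theorem isFixedPt_volterraOp_iff {G₀ : ℝ → ℝ → ℝ}
    (hGG₀ : ∀ s t, 0 ≤ t → t ≤ s → s ≤ T → G s t = G₀ s t) {H : ℝ → ℝ}
    (hH : ∀ u : Icc (0:ℝ) T, h u = H u) {f : ℝ → ℝ} {x : C(Icc (0:ℝ) T, ℝ)}
    (hfx : ∀ u : Icc (0:ℝ) T, x u = f u) :
    IsFixedPt (volterraOp hT hG h) x ↔
      ∀ t ∈ Icc (0:ℝ) T, f t = (∫ s in t..T, G₀ s t * f s) + H t := by
  have hint (u : Icc (0:ℝ) T) :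
      ∫ s in (u:ℝ)..T, G s u * IccExtend hT x s = ∫ s in (u:ℝ)..T, G₀ s u * f s :=
    integral_congr fun s hs => by
      rw [uIcc_of_le u.2.2] at hs
      have hs' : s ∈ Icc (0:ℝ) T := ⟨u.2.1.trans hs.1, hs.2⟩
      simp only [hGG₀ s u u.2.1 hs.1 hs.2, IccExtend_of_mem hT _ hs', hfx]
  simp only [IsFixedPt, ContinuousMap.ext_iff, volterraOp_apply, hint, hH, hfx, Subtype.forall,
    eq_comm (a := f _)]

end VolterraOp

/-- Existence and uniqueness of a continuous, strictly positive solution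
to the backward Volterra equation `f t = ∫_t^T G s t * f s ds + H t`. -/
theorem stmt_0 (T : ℝ) (hT : 0 < T) (G : ℝ → ℝ → ℝ) (H : ℝ → ℝ)
    (hGcont : ContinuousOn (fun p : ℝ × ℝ => G p.1 p.2)
      {p : ℝ × ℝ | 0 ≤ p.2 ∧ p.2 ≤ p.1 ∧ p.1 ≤ T})
    (hGnonneg : ∀ s t : ℝ, 0 ≤ t → t ≤ s → s ≤ T → 0 ≤ G s t)
    (hHcont : ContinuousOn H (Set.Icc 0 T))
    (hHpos : ∀ t ∈ Set.Icc (0:ℝ) T, 0 < H t) :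
    (∃ f : ℝ → ℝ, ContinuousOn f (Set.Icc 0 T) ∧
      (∀ t ∈ Set.Icc (0:ℝ) T, f t = (∫ s in t..T, G s t * f s) + H t) ∧
      (∀ t ∈ Set.Icc (0:ℝ) T, 0 < f t)) ∧
    (∀ f₁ f₂ : ℝ → ℝ, ContinuousOn f₁ (Set.Icc 0 T) → ContinuousOn f₂ (Set.Icc 0 T) →
      (∀ t ∈ Set.Icc (0:ℝ) T, f₁ t = (∫ s in t..T, G s t * f₁ s) + H t) →
      (∀ t ∈ Set.Icc (0:ℝ) T, f₂ t = (∫ s in t..T, G s t * f₂ s) + H t) →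
      ∀ t ∈ Set.Icc (0:ℝ) T, f₁ t = f₂ t) := by
  obtain ⟨G', hG'cont, hG'G⟩ := exists_continuous_eq_on_triangle hT.le hGcont
  have hG'nonneg : ∀ s t, 0 ≤ t → t ≤ s → s ≤ T → 0 ≤ G' s t := fun s t ht hts hsT =>
    hG'G s t ht hts hsT ▸ hGnonneg s t ht hts hsT
  let h : C(Icc (0:ℝ) T, ℝ) := ⟨(Icc 0 T).domRestrict H, hHcont.domRestrict⟩
  have hhpos (u : Icc (0:ℝ) T) : 0 < h u := hHpos u u.2
  set Φ := volterraOp hT.le hG'cont h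
  have hsolves {f : ℝ → ℝ} {y : C(Icc (0:ℝ) T, ℝ)} (hfy : ∀ u : Icc (0:ℝ) T, y u = f u) :
      IsFixedPt Φ y ↔ ∀ t ∈ Icc (0:ℝ) T, f t = (∫ s in t..T, G s t * f s) + H t :=
    isFixedPt_volterraOp_iff hG'G (fun _ => rfl) hfy
  obtain ⟨n, K, hK⟩ := exists_contractingWith_iterate_volterraOp hT.le hG'cont h
  have : Nonempty (Icc (0:ℝ) T) := (nonempty_Icc.2 hT.le).to_subtype
  set x := ContractingWith.fixedPoint _ hK
  have hx : IsFixedPt Φ x := hK.isFixedPt_fixedPoint_iterate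
  have hx0 : 0 ≤ x := hK.fixedPoint_mem_of_mapsTo ContinuousMap.isClosed_setOf_nonneg
    ((mapsTo_volterraOp_nonneg hG'nonneg fun u => (hhpos u).le).iterate n)
    (le_refl (0 : C(Icc (0:ℝ) T, ℝ)))
  refine ⟨⟨IccExtend hT.le x, x.continuous.Icc_extend'.continuousOn,
    (hsolves fun u => (IccExtend_val _ _ u).symm).1 hx, fun t ht => ?_⟩, ?_⟩
  · rw [IccExtend_of_mem _ _ ht, ← hx]
    exact volterraOp_pos hG'nonneg hhpos hx0 _
  · intro f₁ f₂ hf₁ hf₂ heq₁ heq₂ t ht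
    have hfix₁ : IsFixedPt Φ ⟨_, hf₁.domRestrict⟩ := (hsolves fun _ => rfl).2 heq₁
    have hfix₂ : IsFixedPt Φ ⟨_, hf₂.domRestrict⟩ := (hsolves fun _ => rfl).2 heq₂
    exact congr($(hK.fixedPoint_unique' (hfix₁.iterate n) (hfix₂.iterate n)) ⟨t, ht⟩)
end

section
/- Let T > 0, let G : [0,∞) × Δ_T → ℝ be continuous with G(r,s,t) ≥ 0 for all r ≥ 0 and (s,t) ∈ Δ_T, and let H : [0,∞) × [0,T] → ℝ be continuous with H(r,t) > 0 for all (r,t). For each r ≥ 0, let f(·;r) : [0,T] → ℝ be the unique continuous solution of f(t;r) = ∫_t^T G(r,s,t) f(s;r) ds + H(r,t) for all t ∈ [0,T] (which exists and is positive). Then the function (t,r) ↦ f(t;r) is continuous on [0,T] × [0,∞). -/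
/-!
Fix `r₀ ≥ 0`. For `r` near `r₀` the difference `g = f(·, r) - f(·, r₀)` satisfies the backward
Volterra inequality `|g t| ≤ M ∫_t^T |g| + e(r)`, where `M` bounds the kernel and `e(r)` is
controlled by `sup |G(r) - G(r₀)|` and `sup |H(r) - H(r₀)|`; these tend to `0` because `G` and
`H` are uniformly continuous on compacts. Grönwall's inequality gives `|g| ≤ e(r) e^{MT}`, so
`f(·, r) → f(·, r₀)` uniformly on `[0, T]`, and uniform convergence of continuous sections
yields joint continuity.
-/

open MeasureTheory intervalIntegral Set Filter Topology

theorem mul_gronwallBound_add (M e x : ℝ) :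
    M * gronwallBound 0 M e x + e = e * Real.exp (M * x) := by
  rcases eq_or_ne M 0 with rfl | hM
  · simp [gronwallBound_K0]
  · rw [gronwallBound_of_K_ne_0 hM]
    field_simp
    ring

theorem le_mul_exp_of_le_mul_integral_add {u : ℝ → ℝ} {a b M e : ℝ} (hM : 0 ≤ M)
    (hu : ContinuousOn u (Icc a b)) (h : ∀ t ∈ Icc a b, u t ≤ M * (∫ s in t..b, u s) + e) :
    ∀ t ∈ Icc a b, u t ≤ e * Real.exp (M * (b - t)) := by
  intro t ht
  have hab : 0 ≤ b - a := by linarith [ht.1.trans ht.2]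
  -- Reversing time, `φ τ = ∫_{b-τ}^b u` has `φ 0 = 0` and `φ' ≤ M φ + e`.
  set v : ℝ → ℝ := fun σ => u (b - σ)
  set φ : ℝ → ℝ := fun τ => ∫ σ in 0..τ, v σ
  have hv : ContinuousOn v (Icc 0 (b - a)) :=
    hu.comp (by fun_prop) fun σ hσ => ⟨by linarith [hσ.2], by linarith [hσ.1]⟩
  have hφ_eq : ∀ τ, φ τ = ∫ s in b - τ..b, u s := fun τ => by
    simp [φ, v, integral_comp_sub_left]
  have hφ_cont : ContinuousOn φ (Icc 0 (b - a)) := by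
    rw [← uIcc_of_le hab] at hv ⊢
    exact continuousOn_primitive_interval hv.integrableOn_uIcc
  have hφ_deriv : ∀ τ ∈ Ico 0 (b - a), HasDerivWithinAt φ (v τ) (Ici τ) τ := fun τ hτ =>
    integral_hasDerivWithinAt_right
      ((hv.mono (Icc_subset_Icc le_rfl hτ.2.le)).intervalIntegrable_of_Icc hτ.1)
      ⟨_, Icc_mem_nhdsGT_of_mem hτ, hv.aestronglyMeasurable measurableSet_Icc⟩
      ((hv τ (Ico_subset_Icc_self hτ)).mono_of_mem_nhdsWithin (Icc_mem_nhdsGT_of_mem hτ))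
  have hφ_le : φ (b - t) ≤ gronwallBound 0 M e (b - t - 0) :=
    le_gronwallBound_of_liminf_deriv_right_le hφ_cont
      (fun τ hτ _ hr => (hφ_deriv τ hτ).liminf_right_slope_le hr) (by simp [φ])
      (fun τ hτ => by
        rw [hφ_eq]
        simpa [v] using h (b - τ) ⟨by linarith [hτ.2], by linarith [hτ.1]⟩)
      (b - t) ⟨by linarith [ht.2], by linarith [ht.1]⟩
  rw [hφ_eq, sub_sub_cancel, sub_zero] at hφ_le
  calc u t ≤ M * (∫ s in t..b, u s) + e := h t ht
    _ ≤ M * gronwallBound 0 M e (b - t) + e := by gcongr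
    _ = e * Real.exp (M * (b - t)) := mul_gronwallBound_add M e (b - t)

section VolterraStability

variable {a b M C δK δh : ℝ} {K₁ K₂ : ℝ → ℝ → ℝ} {h₁ h₂ f₁ f₂ : ℝ → ℝ}

theorem abs_sub_le_mul_integral_abs_sub_add
    (hK₁ : ∀ t ∈ Icc a b, ContinuousOn (fun s => K₁ s t) (Icc t b))
    (hK₂ : ∀ t ∈ Icc a b, ContinuousOn (fun s => K₂ s t) (Icc t b))
    (hf₁ : ContinuousOn f₁ (Icc a b)) (hf₂ : ContinuousOn f₂ (Icc a b))
    (hfix₁ : ∀ t ∈ Icc a b, f₁ t = (∫ s in t..b, K₁ s t * f₁ s) + h₁ t)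
    (hfix₂ : ∀ t ∈ Icc a b, f₂ t = (∫ s in t..b, K₂ s t * f₂ s) + h₂ t)
    (hM : ∀ t ∈ Icc a b, ∀ s ∈ Icc t b, |K₁ s t| ≤ M)
    (hδK : ∀ t ∈ Icc a b, ∀ s ∈ Icc t b, |K₁ s t - K₂ s t| ≤ δK)
    (hδh : ∀ t ∈ Icc a b, |h₁ t - h₂ t| ≤ δh) (hC : ∀ s ∈ Icc a b, |f₂ s| ≤ C) :
    ∀ t ∈ Icc a b,
      |f₁ t - f₂ t| ≤ M * (∫ s in t..b, |f₁ s - f₂ s|) + ((b - a) * C * δK + δh) := by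
  intro t ht
  have hsub : Icc t b ⊆ Icc a b := Icc_subset_Icc_left ht.1
  have hi₁ : IntervalIntegrable (fun s => K₁ s t * f₁ s) volume t b :=
    ((hK₁ t ht).mul (hf₁.mono hsub)).intervalIntegrable_of_Icc ht.2
  have hi₂ : IntervalIntegrable (fun s => K₂ s t * f₂ s) volume t b :=
    ((hK₂ t ht).mul (hf₂.mono hsub)).intervalIntegrable_of_Icc ht.2
  have hig : IntervalIntegrable (fun s => |f₁ s - f₂ s|) volume t b :=
    ((hf₁.sub hf₂).abs.mono hsub).intervalIntegrable_of_Icc ht.2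
  have hsplit : f₁ t - f₂ t = (∫ s in t..b, (K₁ s t * (f₁ s - f₂ s) + (K₁ s t - K₂ s t) * f₂ s))
      + (h₁ t - h₂ t) := by
    rw [hfix₁ t ht, hfix₂ t ht, add_sub_add_comm, ← integral_sub hi₁ hi₂]
    congr 1
    exact integral_congr fun s _ => by ring
  have hpointwise : ∀ s ∈ Icc t b,
      |K₁ s t * (f₁ s - f₂ s) + (K₁ s t - K₂ s t) * f₂ s| ≤ M * |f₁ s - f₂ s| + δK * C := by
    intro s hs
    have hδK_nonneg : 0 ≤ δK := (abs_nonneg _).trans (hδK t ht s hs)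
    calc _ ≤ |K₁ s t| * |f₁ s - f₂ s| + |K₁ s t - K₂ s t| * |f₂ s| := by
          rw [← abs_mul, ← abs_mul]; exact abs_add_le _ _
      _ ≤ M * |f₁ s - f₂ s| + δK * C := by
          gcongr
          exacts [hM t ht s hs, hδK t ht s hs, hC s (hsub hs)]
  have hδKC : 0 ≤ δK * C :=
    mul_nonneg ((abs_nonneg _).trans (hδK t ht t ⟨le_rfl, ht.2⟩)) ((abs_nonneg _).trans (hC t ht))
  calc |f₁ t - f₂ t|
      ≤ |∫ s in t..b, (K₁ s t * (f₁ s - f₂ s) + (K₁ s t - K₂ s t) * f₂ s)| + |h₁ t - h₂ t| := by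
        rw [hsplit]; exact abs_add_le _ _
    _ ≤ (∫ s in t..b, (M * |f₁ s - f₂ s| + δK * C)) + δh := by
        gcongr ?_ + ?_
        · refine (abs_integral_le_integral_abs ht.2).trans (integral_mono_on ht.2 ?_ ?_ hpointwise)
          · exact (((hK₁ t ht).mul ((hf₁.sub hf₂).mono hsub)).add
              (((hK₁ t ht).sub (hK₂ t ht)).mul (hf₂.mono hsub))).abs.intervalIntegrable_of_Icc ht.2
          · exact (hig.const_mul M).add intervalIntegrable_const
        · exact hδh t ht
    _ = M * (∫ s in t..b, |f₁ s - f₂ s|) + ((b - t) * (δK * C) + δh) := by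
        rw [integral_add (hig.const_mul M) intervalIntegrable_const,
          intervalIntegral.integral_const_mul, intervalIntegral.integral_const, smul_eq_mul]
        ring
    _ ≤ M * (∫ s in t..b, |f₁ s - f₂ s|) + ((b - a) * C * δK + δh) := by
        have : (b - t) * (δK * C) ≤ (b - a) * (δK * C) := by gcongr; exact ht.1
        linarith

theorem abs_sub_le_of_volterra
    (hK₁ : ∀ t ∈ Icc a b, ContinuousOn (fun s => K₁ s t) (Icc t b))
    (hK₂ : ∀ t ∈ Icc a b, ContinuousOn (fun s => K₂ s t) (Icc t b))
    (hf₁ : ContinuousOn f₁ (Icc a b)) (hf₂ : ContinuousOn f₂ (Icc a b))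
    (hfix₁ : ∀ t ∈ Icc a b, f₁ t = (∫ s in t..b, K₁ s t * f₁ s) + h₁ t)
    (hfix₂ : ∀ t ∈ Icc a b, f₂ t = (∫ s in t..b, K₂ s t * f₂ s) + h₂ t)
    (hM : ∀ t ∈ Icc a b, ∀ s ∈ Icc t b, |K₁ s t| ≤ M)
    (hδK : ∀ t ∈ Icc a b, ∀ s ∈ Icc t b, |K₁ s t - K₂ s t| ≤ δK)
    (hδh : ∀ t ∈ Icc a b, |h₁ t - h₂ t| ≤ δh) (hC : ∀ s ∈ Icc a b, |f₂ s| ≤ C) :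
    ∀ t ∈ Icc a b, |f₁ t - f₂ t| ≤ ((b - a) * C * δK + δh) * Real.exp (M * (b - a)) := by
  intro t ht
  have htt : t ∈ Icc t b := ⟨le_rfl, ht.2⟩
  have hM_nonneg : 0 ≤ M := (abs_nonneg _).trans (hM t ht t htt)
  have he_nonneg : 0 ≤ (b - a) * C * δK + δh := by
    have := (abs_nonneg _).trans (hC t ht)
    have := (abs_nonneg _).trans (hδK t ht t htt)
    have := (abs_nonneg _).trans (hδh t ht)
    have : 0 ≤ b - a := by linarith [ht.1.trans ht.2]
    positivity
  calc |f₁ t - f₂ t| ≤ ((b - a) * C * δK + δh) * Real.exp (M * (b - t)) :=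
        le_mul_exp_of_le_mul_integral_add hM_nonneg (hf₁.sub hf₂).abs
          (abs_sub_le_mul_integral_abs_sub_add hK₁ hK₂ hf₁ hf₂ hfix₁ hfix₂ hM hδK hδh hC) t ht
    _ ≤ ((b - a) * C * δK + δh) * Real.exp (M * (b - a)) := by
        gcongr
        exact ht.1

end VolterraStability

theorem IsCompact.eventually_forall_dist_lt {α β E : Type*} [TopologicalSpace α]
    [TopologicalSpace β] [PseudoMetricSpace E] {f : α → β → E} {s : Set α} {k : Set β} {q : α}
    (hk : IsCompact k) (hf : ContinuousOn f.uncurry (s ×ˢ k)) (hq : q ∈ s) :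
    ∀ ε > 0, ∀ᶠ p in 𝓝[s] q, ∀ x ∈ k, dist (f p x) (f q x) < ε := fun ε hε => by
  obtain ⟨v, hv, hvk⟩ := hk.mem_uniformity_of_prod hf hq (Metric.dist_mem_uniformity hε)
  exact eventually_of_mem hv hvk

theorem continuousOn_prod_of_tendstoUniformlyOn {α β γ : Type*} [TopologicalSpace α]
    [TopologicalSpace β] [UniformSpace γ] {f : α → β → γ} {k : Set α} {s : Set β}
    (hcont : ∀ r ∈ s, ContinuousOn (fun t => f t r) k)
    (hunif : ∀ r ∈ s, TendstoUniformlyOn (fun r' t => f t r') (fun t => f t r) (𝓝[s] r) k) :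
    ContinuousOn (fun p : α × β => f p.1 p.2) (k ×ˢ s) := by
  rintro ⟨t, r⟩ ⟨ht, hr⟩
  rw [ContinuousWithinAt, nhdsWithin_prod_eq]
  exact tendsto_comp_of_locally_uniform_limit_within (F := fun p : α × β => fun t => f t p.2)
    (hcont r hr t ht) tendsto_fst
    fun u hu => ⟨k, self_mem_nhdsWithin, tendsto_snd.eventually (hunif r hr u hu)⟩

theorem isCompact_triangle (T : ℝ) : IsCompact {q : ℝ × ℝ | 0 ≤ q.2 ∧ q.2 ≤ q.1 ∧ q.1 ≤ T} :=
  (isCompact_Icc.prod isCompact_Icc).of_isClosed_subset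
    ((isClosed_le continuous_const continuous_snd).inter
      ((isClosed_le continuous_snd continuous_fst).inter
        (isClosed_le continuous_fst continuous_const)))
    fun _ ⟨h₁, h₂, h₃⟩ => ⟨⟨h₁.trans h₂, h₃⟩, ⟨h₁, h₂.trans h₃⟩⟩

theorem stmt_1_general (T : ℝ)
    (G : ℝ → ℝ → ℝ → ℝ) (H : ℝ → ℝ → ℝ) (f : ℝ → ℝ → ℝ)
    (hGcont : ContinuousOn (fun p : ℝ × ℝ × ℝ => G p.1 p.2.1 p.2.2)
      {p : ℝ × ℝ × ℝ | 0 ≤ p.1 ∧ 0 ≤ p.2.2 ∧ p.2.2 ≤ p.2.1 ∧ p.2.1 ≤ T})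
    (hHcont : ContinuousOn (fun p : ℝ × ℝ => H p.1 p.2) (Set.Ici 0 ×ˢ Set.Icc 0 T))
    (hfcont : ∀ r ∈ Set.Ici (0:ℝ), ContinuousOn (fun t => f t r) (Set.Icc 0 T))
    (hffix : ∀ r ∈ Set.Ici (0:ℝ), ∀ t ∈ Set.Icc (0:ℝ) T,
      f t r = (∫ s in t..T, G r s t * f s r) + H r t) :
    ContinuousOn (fun p : ℝ × ℝ => f p.1 p.2) (Set.Icc 0 T ×ˢ Set.Ici 0) := by
  have hGs : ∀ r ∈ Ici (0 : ℝ), ∀ t ∈ Icc 0 T, ContinuousOn (fun s => G r s t) (Icc t T) :=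
    fun r hr t ht => hGcont.comp (f := fun s => (r, s, t)) (by fun_prop)
      fun s hs => ⟨hr, ht.1, hs.1, hs.2⟩
  refine continuousOn_prod_of_tendstoUniformlyOn hfcont fun r₀ hr₀ =>
    Metric.tendstoUniformlyOn_iff.2 fun ε hε => ?_
  obtain ⟨C, hC⟩ := isCompact_Icc.exists_bound_of_continuousOn (hfcont r₀ hr₀)
  obtain ⟨M, hM⟩ := (isCompact_triangle T).exists_bound_of_continuousOn
    (hGcont.comp (f := fun q => (r₀, q)) (by fun_prop) fun q hq => ⟨hr₀, hq⟩)
  obtain ⟨η, hη, hηε⟩ := exists_pos_mul_lt hε ((T * C + 1) * Real.exp ((M + 1) * T))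
  have hG := (isCompact_triangle T).eventually_forall_dist_lt (s := Ici 0)
    (f := fun r (q : ℝ × ℝ) => G r q.1 q.2) hGcont hr₀
  filter_upwards [hG 1 one_pos, hG η hη, isCompact_Icc.eventually_forall_dist_lt hHcont hr₀ η hη,
    self_mem_nhdsWithin] with r hG₁ hGη hHη hr t ht
  rw [dist_comm, Real.dist_eq]
  refine (abs_sub_le_of_volterra (hGs r hr) (hGs r₀ hr₀) (hfcont r hr) (hfcont r₀ hr₀)
    (hffix r hr) (hffix r₀ hr₀) (M := M + 1) (δK := η) (δh := η) ?_ ?_ ?_ hC t ht).trans_lt ?_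
  · intro t' ht' s hs
    have h₁ : |G r s t' - G r₀ s t'| < 1 := hG₁ (s, t') ⟨ht'.1, hs.1, hs.2⟩
    have h₂ : |G r₀ s t'| ≤ M := hM (s, t') ⟨ht'.1, hs.1, hs.2⟩
    linarith [abs_sub_abs_le_abs_sub (G r s t') (G r₀ s t')]
  · exact fun t' ht' s hs => (hGη (s, t') ⟨ht'.1, hs.1, hs.2⟩).le
  · exact fun t' ht' => (hHη t' ht').le
  · rw [sub_zero]
    convert hηε using 1
    ring

/-- Joint continuity in `(t, r)` of the unique positive fixed point of the
parametrized backward Volterra equation `f t r = ∫_t^T G r s t * f s r ds + H r t`. -/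
theorem stmt_1 (T : ℝ) (hT : 0 < T)
    (G : ℝ → ℝ → ℝ → ℝ) (H : ℝ → ℝ → ℝ) (f : ℝ → ℝ → ℝ)
    (hGcont : ContinuousOn (fun p : ℝ × ℝ × ℝ => G p.1 p.2.1 p.2.2)
      {p : ℝ × ℝ × ℝ | 0 ≤ p.1 ∧ 0 ≤ p.2.2 ∧ p.2.2 ≤ p.2.1 ∧ p.2.1 ≤ T})
    (hGnonneg : ∀ r s t : ℝ, 0 ≤ r → 0 ≤ t → t ≤ s → s ≤ T → 0 ≤ G r s t)
    (hHcont : ContinuousOn (fun p : ℝ × ℝ => H p.1 p.2) (Set.Ici 0 ×ˢ Set.Icc 0 T))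
    (hHpos : ∀ r ∈ Set.Ici (0:ℝ), ∀ t ∈ Set.Icc (0:ℝ) T, 0 < H r t)
    (hfcont : ∀ r ∈ Set.Ici (0:ℝ), ContinuousOn (fun t => f t r) (Set.Icc 0 T))
    (hffix : ∀ r ∈ Set.Ici (0:ℝ), ∀ t ∈ Set.Icc (0:ℝ) T,
      f t r = (∫ s in t..T, G r s t * f s r) + H r t)
    (hfpos : ∀ r ∈ Set.Ici (0:ℝ), ∀ t ∈ Set.Icc (0:ℝ) T, 0 < f t r)
    (hfuniq : ∀ r ∈ Set.Ici (0:ℝ), ∀ g : ℝ → ℝ, ContinuousOn g (Set.Icc 0 T) →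
      (∀ t ∈ Set.Icc (0:ℝ) T, g t = (∫ s in t..T, G r s t * g s) + H r t) →
      ∀ t ∈ Set.Icc (0:ℝ) T, g t = f t r) :
    ContinuousOn (fun p : ℝ × ℝ => f p.1 p.2) (Set.Icc 0 T ×ˢ Set.Ici 0) :=
  stmt_1_general T G H f hGcont hHcont hfcont hffix
end

section
/- Let T > 0, let G₁, G₂ : Δ_T → [0,∞) be continuous, let H₁, H₂ : [0,T] → ℝ be continuous, and let f₁, f₂ : [0,T] → ℝ be continuous functions satisfying fᵢ(t) = ∫_t^T Gᵢ(s,t) fᵢ(s) ds + Hᵢ(t) for all t ∈ [0,T] and i = 1,2. Then sup_{t∈[0,T]} |f₁(t) − f₂(t)| ≤ ( T · sup_{(s,t)∈Δ_T} |G₁(s,t) − G₂(s,t)| · sup_{s∈[0,T]} |f₁(s)| + sup_{t∈[0,T]} |H₁(t) − H₂(t)| ) · exp( T · sup_{(s,t)∈Δ_T} G₂(s,t) ). -/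
/-!
Splitting `G₁ f₁ - G₂ f₂ = (G₁ - G₂) f₁ + G₂ (f₁ - f₂)` and using `0 ≤ G₂ ≤ K := sup G₂`, the
difference `d = |f₁ - f₂|` satisfies `d t ≤ C + K ∫_t^T d` on `[0, T]`, with
`C = T · sup |G₁ - G₂| · sup |f₁| + sup |H₁ - H₂|`. Gronwall's inequality, run backward from `T`,
then gives `d t ≤ C · exp (K (T - t)) ≤ C · exp (T K)`.
-/

open MeasureTheory intervalIntegral Set

theorem isCompact_triangle_s2 (a b : ℝ) : IsCompact {p : ℝ × ℝ | a ≤ p.2 ∧ p.2 ≤ p.1 ∧ p.1 ≤ b} :=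
  (isCompact_Icc (a := (a, a)) (b := (b, b))).of_isClosed_subset
    ((isClosed_le continuous_const continuous_snd).inter
      ((isClosed_le continuous_snd continuous_fst).inter
        (isClosed_le continuous_fst continuous_const)))
    fun _ ⟨h₁, h₂, h₃⟩ => ⟨⟨h₁.trans h₂, h₁⟩, ⟨h₃, h₂.trans h₃⟩⟩

theorem IsCompact.le_sSup_image {α : Type*} [TopologicalSpace α] {s : Set α} {f : α → ℝ}
    (hs : IsCompact s) (hf : ContinuousOn f s) {x : α} (hx : x ∈ s) : f x ≤ sSup (f '' s) :=
  le_csSup (hs.bddAbove_image hf) (mem_image_of_mem f hx)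

theorem abs_integral_mul_sub_integral_mul_le {g₁ g₂ h₁ h₂ : ℝ → ℝ} {a b M N K : ℝ} (hab : a ≤ b)
    (hg₁ : ContinuousOn g₁ (Icc a b)) (hg₂ : ContinuousOn g₂ (Icc a b))
    (hh₁ : ContinuousOn h₁ (Icc a b)) (hh₂ : ContinuousOn h₂ (Icc a b))
    (hg : ∀ s ∈ Icc a b, |g₁ s - g₂ s| ≤ M) (hh : ∀ s ∈ Icc a b, |h₁ s| ≤ N)
    (hg₂K : ∀ s ∈ Icc a b, 0 ≤ g₂ s ∧ g₂ s ≤ K) :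
    |(∫ s in a..b, g₁ s * h₁ s) - ∫ s in a..b, g₂ s * h₂ s|
      ≤ (b - a) * M * N + K * ∫ s in a..b, |h₁ s - h₂ s| := by
  have hintegrable {f : ℝ → ℝ} (hf : ContinuousOn f (Icc a b)) :
      IntervalIntegrable f volume a b :=
    hf.intervalIntegrable_of_Icc hab
  have hdiff : ContinuousOn (fun s => |h₁ s - h₂ s|) (Icc a b) := (hh₁.sub hh₂).abs
  have hbound : ∀ s ∈ Icc a b,
      |g₁ s * h₁ s - g₂ s * h₂ s| ≤ M * N + K * |h₁ s - h₂ s| := fun s hs => by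
    obtain ⟨hg₂0, hg₂le⟩ := hg₂K s hs
    calc |g₁ s * h₁ s - g₂ s * h₂ s| = |(g₁ s - g₂ s) * h₁ s + g₂ s * (h₁ s - h₂ s)| :=
        congrArg abs (by ring)
      _ ≤ |g₁ s - g₂ s| * |h₁ s| + g₂ s * |h₁ s - h₂ s| := by
        rw [← abs_mul, ← abs_of_nonneg hg₂0, ← abs_mul, abs_of_nonneg hg₂0]; exact abs_add_le _ _
      _ ≤ M * N + K * |h₁ s - h₂ s| := by
        gcongr
        · exact (abs_nonneg _).trans (hg s hs)
        · exact hg s hs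
        · exact hh s hs
  have hI₁ : IntervalIntegrable (fun s => g₁ s * h₁ s) volume a b := hintegrable (hg₁.mul hh₁)
  have hI₂ : IntervalIntegrable (fun s => g₂ s * h₂ s) volume a b := hintegrable (hg₂.mul hh₂)
  have hIK : IntervalIntegrable (fun s => K * |h₁ s - h₂ s|) volume a b :=
    hintegrable (hdiff.const_smul K)
  calc |(∫ s in a..b, g₁ s * h₁ s) - ∫ s in a..b, g₂ s * h₂ s|
      = |∫ s in a..b, g₁ s * h₁ s - g₂ s * h₂ s| := by rw [integral_sub hI₁ hI₂]
    _ ≤ ∫ s in a..b, |g₁ s * h₁ s - g₂ s * h₂ s| := abs_integral_le_integral_abs hab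
    _ ≤ ∫ s in a..b, M * N + K * |h₁ s - h₂ s| :=
      integral_mono_on hab (hI₁.sub hI₂).abs (intervalIntegrable_const.add hIK) hbound
    _ = (b - a) * M * N + K * ∫ s in a..b, |h₁ s - h₂ s| := by
      rw [integral_add intervalIntegrable_const hIK, intervalIntegral.integral_const,
        intervalIntegral.integral_const_mul, smul_eq_mul, mul_assoc]

theorem mul_gronwallBound_zero_add (K ε x : ℝ) :
    K * gronwallBound 0 K ε x + ε = ε * Real.exp (K * x) := by
  rcases eq_or_ne K 0 with rfl | hK
  · simp
  · rw [gronwallBound_of_K_ne_0 hK]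
    field_simp
    ring

theorem ContinuousOn.exists_continuous_eqOn_Icc {φ : ℝ → ℝ} {a b : ℝ} (hab : a ≤ b)
    (hφ : ContinuousOn φ (Icc a b)) : ∃ ψ : ℝ → ℝ, Continuous ψ ∧ EqOn ψ φ (Icc a b) :=
  ⟨fun x => φ (projIcc a b hab x),
    hφ.comp_continuous (continuous_subtype_val.comp continuous_projIcc)
      fun x => (projIcc a b hab x).2,
    fun _ hx => by simp [projIcc_of_mem hab hx]⟩

theorem le_mul_exp_of_le_add_mul_integral {φ : ℝ → ℝ} {a b C K : ℝ} (hK : 0 ≤ K)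
    (hφ : ContinuousOn φ (Icc a b))
    (h : ∀ t ∈ Icc a b, φ t ≤ C + K * ∫ s in t..b, φ s) :
    ∀ t ∈ Icc a b, φ t ≤ C * Real.exp (K * (b - t)) := by
  intro t ht
  obtain ⟨ψ, hψ, hψφ⟩ := hφ.exists_continuous_eqOn_Icc (ht.1.trans ht.2)
  have hintegral_eq : ∀ t ∈ Icc a b, ∫ s in t..b, φ s = ∫ s in t..b, ψ s := fun t ht =>
    integral_congr fun s hs =>
      (hψφ (uIcc_subset_Icc ht (right_mem_Icc.2 (ht.1.trans ht.2)) hs)).symm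
  -- `u` runs time backward from `b`, so that the forward Gronwall inequality applies to it.
  set u : ℝ → ℝ := fun x => ∫ s in (b - x)..b, ψ s
  have hu : ∀ x, HasDerivAt u (ψ (b - x)) x := fun x => by
    simpa [Function.comp_def] using (integral_hasDerivAt_left (hψ.intervalIntegrable _ _)
      (hψ.stronglyMeasurableAtFilter _ _) hψ.continuousAt).comp x ((hasDerivAt_id x).const_sub b)
  have hmem : ∀ x ∈ Icc 0 (b - a), b - x ∈ Icc a b := fun x hx =>
    ⟨by linarith [hx.2], by linarith [hx.1]⟩
  have hgron : ∀ x ∈ Icc 0 (b - a), u x ≤ gronwallBound 0 K C (x - 0) :=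
    le_gronwallBound_of_liminf_deriv_right_le (fun x _ => (hu x).continuousAt.continuousWithinAt)
      (fun x _ _ hr => (hu x).hasDerivWithinAt.liminf_right_slope_le hr) (by simp [u])
      fun x hx => by
        have hx' := hmem x (Ico_subset_Icc_self hx)
        have := h (b - x) hx'
        rw [hintegral_eq _ hx', ← hψφ hx'] at this
        linarith
  have hbt : b - t ∈ Icc 0 (b - a) := ⟨by linarith [ht.2], by linarith [ht.1]⟩
  calc φ t ≤ C + K * u (b - t) := by simpa [u, hintegral_eq t ht] using h t ht
    _ ≤ C + K * gronwallBound 0 K C (b - t) := by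
      gcongr
      simpa using hgron _ hbt
    _ = C * Real.exp (K * (b - t)) := by rw [← mul_gronwallBound_zero_add]; ring

theorem abs_sub_le_add_mul_integral_of_volterra {G₁ G₂ : ℝ → ℝ → ℝ} {H₁ H₂ f₁ f₂ : ℝ → ℝ}
    {T M N L K : ℝ}
    (hG₁ : ContinuousOn (fun p : ℝ × ℝ => G₁ p.1 p.2) {p : ℝ × ℝ | 0 ≤ p.2 ∧ p.2 ≤ p.1 ∧ p.1 ≤ T})
    (hG₂ : ContinuousOn (fun p : ℝ × ℝ => G₂ p.1 p.2) {p : ℝ × ℝ | 0 ≤ p.2 ∧ p.2 ≤ p.1 ∧ p.1 ≤ T})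
    (hf₁c : ContinuousOn f₁ (Icc 0 T)) (hf₂c : ContinuousOn f₂ (Icc 0 T))
    (hf₁ : ∀ t ∈ Icc 0 T, f₁ t = (∫ s in t..T, G₁ s t * f₁ s) + H₁ t)
    (hf₂ : ∀ t ∈ Icc 0 T, f₂ t = (∫ s in t..T, G₂ s t * f₂ s) + H₂ t)
    (hGM : ∀ s t, 0 ≤ t → t ≤ s → s ≤ T → |G₁ s t - G₂ s t| ≤ M)
    (hfN : ∀ s ∈ Icc 0 T, |f₁ s| ≤ N) (hHL : ∀ t ∈ Icc 0 T, |H₁ t - H₂ t| ≤ L)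
    (hG₂K : ∀ s t, 0 ≤ t → t ≤ s → s ≤ T → 0 ≤ G₂ s t ∧ G₂ s t ≤ K) :
    ∀ t ∈ Icc 0 T, |f₁ t - f₂ t| ≤ T * M * N + L + K * ∫ s in t..T, |f₁ s - f₂ s| := by
  intro t ht
  have hsub : Icc t T ⊆ Icc 0 T := Icc_subset_Icc_left ht.1
  have hslice {G : ℝ → ℝ → ℝ}
      (hG : ContinuousOn (fun p : ℝ × ℝ => G p.1 p.2) {p | 0 ≤ p.2 ∧ p.2 ≤ p.1 ∧ p.1 ≤ T}) :
      ContinuousOn (fun s => G s t) (Icc t T) :=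
    hG.comp (continuous_id.prodMk continuous_const).continuousOn fun s hs => ⟨ht.1, hs⟩
  have hintegrals := abs_integral_mul_sub_integral_mul_le ht.2 (hslice hG₁) (hslice hG₂)
    (hf₁c.mono hsub) (hf₂c.mono hsub) (fun s hs => hGM s t ht.1 hs.1 hs.2)
    (fun s hs => hfN s (hsub hs)) (fun s hs => hG₂K s t ht.1 hs.1 hs.2)
  have hMN : 0 ≤ t * (M * N) := mul_nonneg ht.1 <| mul_nonneg
    ((abs_nonneg _).trans (hGM t t ht.1 le_rfl ht.2)) ((abs_nonneg _).trans (hfN t ht))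
  rw [hf₁ t ht, hf₂ t ht, add_sub_add_comm]
  refine (abs_add_le _ _).trans ?_
  nlinarith [hHL t ht]

theorem stmt_2_general (T : ℝ) (hT : 0 < T)
    (G₁ G₂ : ℝ → ℝ → ℝ) (H₁ H₂ : ℝ → ℝ) (f₁ f₂ : ℝ → ℝ)
    (hG₁cont : ContinuousOn (fun p : ℝ × ℝ => G₁ p.1 p.2)
      {p : ℝ × ℝ | 0 ≤ p.2 ∧ p.2 ≤ p.1 ∧ p.1 ≤ T})
    (hG₂cont : ContinuousOn (fun p : ℝ × ℝ => G₂ p.1 p.2)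
      {p : ℝ × ℝ | 0 ≤ p.2 ∧ p.2 ≤ p.1 ∧ p.1 ≤ T})
    (hG₂nonneg : ∀ s t : ℝ, 0 ≤ t → t ≤ s → s ≤ T → 0 ≤ G₂ s t)
    (hH₁cont : ContinuousOn H₁ (Set.Icc 0 T))
    (hH₂cont : ContinuousOn H₂ (Set.Icc 0 T))
    (hf₁cont : ContinuousOn f₁ (Set.Icc 0 T))
    (hf₂cont : ContinuousOn f₂ (Set.Icc 0 T))
    (hf₁ : ∀ t ∈ Set.Icc (0:ℝ) T, f₁ t = (∫ s in t..T, G₁ s t * f₁ s) + H₁ t)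
    (hf₂ : ∀ t ∈ Set.Icc (0:ℝ) T, f₂ t = (∫ s in t..T, G₂ s t * f₂ s) + H₂ t) :
    sSup ((fun t => |f₁ t - f₂ t|) '' Set.Icc 0 T) ≤
      (T * sSup ((fun p : ℝ × ℝ => |G₁ p.1 p.2 - G₂ p.1 p.2|) ''
          {p : ℝ × ℝ | 0 ≤ p.2 ∧ p.2 ≤ p.1 ∧ p.1 ≤ T})
        * sSup ((fun s => |f₁ s|) '' Set.Icc 0 T)
        + sSup ((fun t => |H₁ t - H₂ t|) '' Set.Icc 0 T))
      * Real.exp (T * sSup ((fun p : ℝ × ℝ => G₂ p.1 p.2) ''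
          {p : ℝ × ℝ | 0 ≤ p.2 ∧ p.2 ≤ p.1 ∧ p.1 ≤ T})) := by
  have hΔ := isCompact_triangle_s2 0 T
  set M := sSup ((fun p : ℝ × ℝ => |G₁ p.1 p.2 - G₂ p.1 p.2|) '' _)
  set N := sSup ((fun s => |f₁ s|) '' Icc 0 T)
  set L := sSup ((fun t => |H₁ t - H₂ t|) '' Icc 0 T)
  set K := sSup ((fun p : ℝ × ℝ => G₂ p.1 p.2) '' _)
  have hC : 0 ≤ T * M * N + L := by
    have hM : 0 ≤ M := Real.sSup_nonneg <| forall_mem_image.2 fun _ _ => abs_nonneg _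
    have hN : 0 ≤ N := Real.sSup_nonneg <| forall_mem_image.2 fun _ _ => abs_nonneg _
    have hL : 0 ≤ L := Real.sSup_nonneg <| forall_mem_image.2 fun _ _ => abs_nonneg _
    positivity
  have hK : 0 ≤ K :=
    Real.sSup_nonneg <| forall_mem_image.2 fun p hp => hG₂nonneg _ _ hp.1 hp.2.1 hp.2.2
  have hvolterra := abs_sub_le_add_mul_integral_of_volterra hG₁cont hG₂cont hf₁cont hf₂cont hf₁ hf₂
    (fun s t h₀ hts hsT => hΔ.le_sSup_image (f := fun p : ℝ × ℝ => |G₁ p.1 p.2 - G₂ p.1 p.2|)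
      (hG₁cont.sub hG₂cont).abs (x := (s, t)) ⟨h₀, hts, hsT⟩)
    (fun s hs => isCompact_Icc.le_sSup_image (f := fun s => |f₁ s|) hf₁cont.abs hs)
    (fun t ht => isCompact_Icc.le_sSup_image (f := fun t => |H₁ t - H₂ t|)
      (hH₁cont.sub hH₂cont).abs ht)
    (fun s t h₀ hts hsT => ⟨hG₂nonneg s t h₀ hts hsT,
      hΔ.le_sSup_image (f := fun p : ℝ × ℝ => G₂ p.1 p.2) hG₂cont (x := (s, t)) ⟨h₀, hts, hsT⟩⟩)
  refine Real.sSup_le (forall_mem_image.2 fun t ht => ?_) (mul_nonneg hC (Real.exp_pos _).le)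
  calc |f₁ t - f₂ t| ≤ (T * M * N + L) * Real.exp (K * (T - t)) :=
        le_mul_exp_of_le_add_mul_integral hK (hf₁cont.sub hf₂cont).abs hvolterra t ht
    _ ≤ (T * M * N + L) * Real.exp (T * K) := by
        gcongr ?_ * Real.exp ?_
        nlinarith [ht.1]

/-- Gronwall-type stability estimate for two backward Volterra fixed points. -/
theorem stmt_2 (T : ℝ) (hT : 0 < T)
    (G₁ G₂ : ℝ → ℝ → ℝ) (H₁ H₂ : ℝ → ℝ) (f₁ f₂ : ℝ → ℝ)
    (hG₁cont : ContinuousOn (fun p : ℝ × ℝ => G₁ p.1 p.2)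
      {p : ℝ × ℝ | 0 ≤ p.2 ∧ p.2 ≤ p.1 ∧ p.1 ≤ T})
    (hG₂cont : ContinuousOn (fun p : ℝ × ℝ => G₂ p.1 p.2)
      {p : ℝ × ℝ | 0 ≤ p.2 ∧ p.2 ≤ p.1 ∧ p.1 ≤ T})
    (hG₁nonneg : ∀ s t : ℝ, 0 ≤ t → t ≤ s → s ≤ T → 0 ≤ G₁ s t)
    (hG₂nonneg : ∀ s t : ℝ, 0 ≤ t → t ≤ s → s ≤ T → 0 ≤ G₂ s t)
    (hH₁cont : ContinuousOn H₁ (Set.Icc 0 T))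
    (hH₂cont : ContinuousOn H₂ (Set.Icc 0 T))
    (hf₁cont : ContinuousOn f₁ (Set.Icc 0 T))
    (hf₂cont : ContinuousOn f₂ (Set.Icc 0 T))
    (hf₁ : ∀ t ∈ Set.Icc (0:ℝ) T, f₁ t = (∫ s in t..T, G₁ s t * f₁ s) + H₁ t)
    (hf₂ : ∀ t ∈ Set.Icc (0:ℝ) T, f₂ t = (∫ s in t..T, G₂ s t * f₂ s) + H₂ t) :
    sSup ((fun t => |f₁ t - f₂ t|) '' Set.Icc 0 T) ≤
      (T * sSup ((fun p : ℝ × ℝ => |G₁ p.1 p.2 - G₂ p.1 p.2|) ''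
          {p : ℝ × ℝ | 0 ≤ p.2 ∧ p.2 ≤ p.1 ∧ p.1 ≤ T})
        * sSup ((fun s => |f₁ s|) '' Set.Icc 0 T)
        + sSup ((fun t => |H₁ t - H₂ t|) '' Set.Icc 0 T))
      * Real.exp (T * sSup ((fun p : ℝ × ℝ => G₂ p.1 p.2) ''
          {p : ℝ × ℝ | 0 ≤ p.2 ∧ p.2 ≤ p.1 ∧ p.1 ≤ T})) :=
  stmt_2_general T hT G₁ G₂ H₁ H₂ f₁ f₂ hG₁cont hG₂cont hG₂nonneg hH₁cont hH₂cont hf₁cont hf₂cont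
    hf₁ hf₂
end

section
/- Let T > 0, ρ ∈ ℝ, μ, σ, σ_Z, μ_Z > 0, λ ∈ [0,1], η := (μ_Z σ − μ σ_Z)/σ, and let F : [0,T] → ℝ be continuous. Let D := [0,T) × (0,1) × (0,∞) and suppose û : D → ℝ has continuous partial derivatives û_t, û_y, û_z, û_yy, û_yz, û_zz with û_yy(t,y,z) > 0 on D, and û satisfies on D the dual equation û_t + (μ²/(2σ²)) y² û_yy − (μσ_Z/σ) z y û_yz + (1/2)σ_Z² z² û_zz + ρ y û_y + μ_Z z û_z − ((1−λ)ηz + λF(t)) y = ρ û. Let O ⊆ [0,T) × (0,∞) × (0,∞) be open and let y* : O → (0,1) be continuously differentiable in t and twice continuously differentiable in (x,z), satisfying û_y(t, y*(t,x,z), z) = −x on O. Define u(t,x,z) := û(t, y*(t,x,z), z) + x·y*(t,x,z). Then on O: u_x(t,x,z) = y*(t,x,z), u_xx(t,x,z) = −1/û_yy(t, y*(t,x,z), z) < 0, and u satisfies the nonlinear HJB equation u_t − (μ²/(2σ²)) u_x²/u_xx − (μσ_Z z/σ) u_x u_xz/u_xx + (1/2)σ_Z² z² (u_zz − u_xz²/u_xx)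 + μ_Z z u_z − ((1−λ)ηz + λF(t)) u_x = ρ u. -/
/-!
Differentiating the first-order condition `û_y(t, y*, z) = -x` gives `y*_x = -1 / û_yy` and
`y*_z = -û_yz / û_yy`, while the envelope theorem gives `u_x = y*`, `u_t = û_t` and `u_z = û_z`
at `(t, y*, z)`. Hence `u_xx = y*_x`, `u_xz = y*_z` and `u_zz = û_zz + û_yz y*_z`, and
substituting these into the primal equation turns it into the dual equation at `y = y*`.
Only `∂_z ∂_y û` is given, so the derivative `∂_y ∂_z û` needed for `u_zz` comes from a Clairaut
argument. Points of `O` have `t > 0`, since `O` is open and lies in `{t ≥ 0}`.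
-/

/-- Partial derivative of a function of three real variables in its first argument. -/
noncomputable def pd1 (g : ℝ → ℝ → ℝ → ℝ) : ℝ → ℝ → ℝ → ℝ :=
  fun t y z => deriv (fun t' => g t' y z) t

/-- Partial derivative of a function of three real variables in its second argument. -/
noncomputable def pd2 (g : ℝ → ℝ → ℝ → ℝ) : ℝ → ℝ → ℝ → ℝ :=
  fun t y z => deriv (fun y' => g t y' z) y

/-- Partial derivative of a function of three real variables in its third argument. -/
noncomputable def pd3 (g : ℝ → ℝ → ℝ → ℝ) : ℝ → ℝ → ℝ → ℝ :=
  fun t y z => deriv (fun z' => g t y z') z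

open Set Filter Topology Function Metric MeasureTheory intervalIntegral

theorem IsOpen.fst_pos {β : Type*} [TopologicalSpace β] {O : Set (ℝ × β)} (hO : IsOpen O)
    (hnonneg : ∀ p ∈ O, 0 ≤ p.1) {p : ℝ × β} (hp : p ∈ O) : 0 < p.1 := by
  have hO' : O ⊆ interior (Prod.fst ⁻¹' Ici 0) := hO.subset_interior_iff.2 hnonneg
  rw [← isOpenMap_fst.preimage_interior_eq_interior_preimage continuous_fst, interior_Ici] at hO'
  exact hO' hp

section PartialDerivatives

variable {f f₁ f₂ f₁₂ : ℝ → ℝ → ℝ} {U : Set (ℝ × ℝ)}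

theorem HasDerivAt.comp_of_continuousOn_partials (hU : IsOpen U)
    (hf₁ : ∀ p ∈ U, HasDerivAt (f · p.2) (f₁ p.1 p.2) p.1)
    (hf₂ : ∀ p ∈ U, HasDerivAt (f p.1 ·) (f₂ p.1 p.2) p.2)
    (hc₁ : ContinuousOn (uncurry f₁) U) (hc₂ : ContinuousOn (uncurry f₂) U)
    {γ₁ γ₂ : ℝ → ℝ} {γ₁' γ₂' s : ℝ} (hγ₁ : HasDerivAt γ₁ γ₁' s) (hγ₂ : HasDerivAt γ₂ γ₂' s)
    (hs : (γ₁ s, γ₂ s) ∈ U) :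
    HasDerivAt (fun s => f (γ₁ s) (γ₂ s))
      (f₁ (γ₁ s) (γ₂ s) * γ₁' + f₂ (γ₁ s) (γ₂ s) * γ₂') s := by
  have hU' := hU.mem_nhds hs
  have hsmul : Continuous (ContinuousLinearMap.smulRightL ℝ ℝ ℝ 1) :=
    ContinuousLinearMap.continuous _
  have hf := hasStrictFDerivAt_uncurry_coprod
    (f₁ := fun a b => ContinuousLinearMap.smulRight (1 : ℝ →L[ℝ] ℝ) (f₁ a b))
    (f₂ := fun a b => ContinuousLinearMap.smulRight (1 : ℝ →L[ℝ] ℝ) (f₂ a b))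
    (mem_of_superset hU' fun p hp => (hf₁ p hp).hasFDerivAt)
    (mem_of_superset hU' fun p hp => (hf₂ p hp).hasFDerivAt)
    (hsmul.continuousAt.comp (hc₁.continuousAt hU'))
    (hsmul.continuousAt.comp (hc₂.continuousAt hU'))
  refine (hf.hasFDerivAt.comp_hasDerivAt s (hγ₁.prodMk hγ₂)).congr_deriv ?_
  simp [HasUncurry.uncurry, mul_comm]

theorem hasDerivAt_intervalIntegral_of_continuousOn {g g' : ℝ → ℝ → ℝ} {a b z₀ δ : ℝ}
    (hδ : 0 < δ) (hg : ContinuousOn (uncurry g) (uIcc a b ×ˢ closedBall z₀ δ))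
    (hg' : ContinuousOn (uncurry g') (uIcc a b ×ˢ closedBall z₀ δ))
    (hd : ∀ s ∈ uIcc a b, ∀ z ∈ ball z₀ δ, HasDerivAt (g s ·) (g' s z) z) :
    HasDerivAt (fun z => ∫ s in a..b, g s z) (∫ s in a..b, g' s z₀) z₀ := by
  have slice : ∀ {h : ℝ → ℝ → ℝ}, ContinuousOn (uncurry h) (uIcc a b ×ˢ closedBall z₀ δ) →
      ∀ z ∈ closedBall z₀ δ, ContinuousOn (h · z) (uIcc a b) := fun hh z hz =>
    hh.comp (continuous_id.prodMk continuous_const).continuousOn fun s hs => ⟨hs, hz⟩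
  have hz₀ : z₀ ∈ closedBall z₀ δ := mem_closedBall_self hδ.le
  obtain ⟨M, hM⟩ :=
    (isCompact_uIcc.prod (isCompact_closedBall z₀ δ)).exists_bound_of_continuousOn hg'
  refine (hasDerivAt_integral_of_dominated_loc_of_deriv_le (bound := fun _ => M)
    (ball_mem_nhds z₀ hδ) ?_ (slice hg z₀ hz₀).intervalIntegrable
    (((slice hg' z₀ hz₀).aestronglyMeasurable measurableSet_uIcc).mono_set uIoc_subset_uIcc)
    (ae_of_all _ fun s hs z hz => hM (s, z) ⟨uIoc_subset_uIcc hs, ball_subset_closedBall hz⟩)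
    intervalIntegrable_const
    (ae_of_all _ fun s hs z hz => hd s (uIoc_subset_uIcc hs) z hz)).2
  filter_upwards [closedBall_mem_nhds z₀ hδ] with z hz
  exact ((slice hg z hz).aestronglyMeasurable measurableSet_uIcc).mono_set uIoc_subset_uIcc

-- Both sides are the `z`-derivative at `b` of `f w z - f a z = ∫ s in a..w, f₁ s z`.
theorem sub_partial_eq_intervalIntegral
    (hf₁ : ∀ p ∈ U, HasDerivAt (f · p.2) (f₁ p.1 p.2) p.1)
    (hf₂ : ∀ p ∈ U, HasDerivAt (f p.1 ·) (f₂ p.1 p.2) p.2)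
    (hf₁₂ : ∀ p ∈ U, HasDerivAt (f₁ p.1 ·) (f₁₂ p.1 p.2) p.2)
    (hc₁ : ContinuousOn (uncurry f₁) U) (hc₁₂ : ContinuousOn (uncurry f₁₂) U)
    {a w b δ : ℝ} (hδ : 0 < δ) (hK : uIcc a w ×ˢ closedBall b δ ⊆ U) :
    f₂ w b - f₂ a b = ∫ s in a..w, f₁₂ s b := by
  have hb : b ∈ closedBall b δ := mem_closedBall_self hδ.le
  have hdiff : HasDerivAt (fun z => f w z - f a z) (f₂ w b - f₂ a b) b :=
    (hf₂ (w, b) (hK ⟨right_mem_uIcc, hb⟩)).sub (hf₂ (a, b) (hK ⟨left_mem_uIcc, hb⟩))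
  have hint : HasDerivAt (fun z => ∫ s in a..w, f₁ s z) (∫ s in a..w, f₁₂ s b) b :=
    hasDerivAt_intervalIntegral_of_continuousOn hδ (hc₁.mono hK) (hc₁₂.mono hK)
      fun s hs z hz => hf₁₂ (s, z) (hK ⟨hs, ball_subset_closedBall hz⟩)
  have hftc : (fun z => f w z - f a z) =ᶠ[𝓝 b] fun z => ∫ s in a..w, f₁ s z := by
    filter_upwards [closedBall_mem_nhds b hδ] with z hz
    refine (integral_eq_sub_of_hasDerivAt (f := (f · z)) (f' := (f₁ · z))
      (fun s hs => hf₁ (s, z) (hK ⟨hs, hz⟩)) ?_).symm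
    exact ((hc₁.mono hK).comp (continuous_id.prodMk continuous_const).continuousOn
      fun s hs => ⟨hs, hz⟩).intervalIntegrable
  exact (hftc.hasDerivAt_iff.1 hdiff).unique hint

theorem hasDerivAt_partial_swap (hU : IsOpen U)
    (hf₁ : ∀ p ∈ U, HasDerivAt (f · p.2) (f₁ p.1 p.2) p.1)
    (hf₂ : ∀ p ∈ U, HasDerivAt (f p.1 ·) (f₂ p.1 p.2) p.2)
    (hf₁₂ : ∀ p ∈ U, HasDerivAt (f₁ p.1 ·) (f₁₂ p.1 p.2) p.2)
    (hc₁ : ContinuousOn (uncurry f₁) U) (hc₁₂ : ContinuousOn (uncurry f₁₂) U)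
    {p : ℝ × ℝ} (hp : p ∈ U) : HasDerivAt (f₂ · p.2) (f₁₂ p.1 p.2) p.1 := by
  obtain ⟨a, b⟩ := p
  obtain ⟨ε, hε, hball⟩ := Metric.isOpen_iff.1 hU _ hp
  have hδ : 0 < ε / 2 := half_pos hε
  have hK : ∀ w ∈ closedBall a (ε / 2), uIcc a w ×ˢ closedBall b (ε / 2) ⊆ U := by
    intro w hw
    refine Subset.trans ?_ ((closedBall_subset_ball (half_lt_self hε)).trans hball)
    rw [← closedBall_prod_same]
    refine prod_mono ?_ subset_rfl
    rw [Real.closedBall_eq_Icc] at hw ⊢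
    exact uIcc_subset_Icc ⟨by linarith, by linarith⟩ hw
  have hprim : (f₂ · b) =ᶠ[𝓝 a] fun w => f₂ a b + ∫ s in a..w, f₁₂ s b := by
    filter_upwards [closedBall_mem_nhds a hδ] with w hw
    rw [← sub_partial_eq_intervalIntegral hf₁ hf₂ hf₁₂ hc₁ hc₁₂ hδ (hK w hw)]
    ring
  have hslice : ContinuousOn (f₁₂ · b) (ball a ε) :=
    hc₁₂.comp (continuous_id.prodMk continuous_const).continuousOn fun w hw =>
      hball (ball_prod_same a b ε ▸ ⟨hw, mem_ball_self hε⟩)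
  refine hprim.hasDerivAt_iff.2 (HasDerivAt.const_add _ ?_)
  exact integral_hasDerivAt_right IntervalIntegrable.refl
    (hslice.stronglyMeasurableAtFilter isOpen_ball a (mem_ball_self hε))
    (hslice.continuousAt (ball_mem_nhds a hε))

end PartialDerivatives

theorem HasDerivAt.legendre {φ γ : ℝ → ℝ} {γ' x : ℝ} (hφ : HasDerivAt φ (-x) (γ x))
    (hγ : HasDerivAt γ γ' x) : HasDerivAt (fun x => φ (γ x) + x * γ x) (γ x) x := by
  refine ((hφ.comp x hγ).add ((hasDerivAt_id' x).mul hγ)).congr_deriv ?_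
  ring

theorem HasDerivAt.add_mul_of_eq_neg {F γ : ℝ → ℝ} {a b c γ' s : ℝ}
    (hF : HasDerivAt F (a + b * γ') s) (hγ : HasDerivAt γ γ' s) (hb : b = -c) :
    HasDerivAt (fun s => F s + c * γ s) a s := by
  refine (hF.add (hγ.const_mul c)).congr_deriv ?_
  rw [hb]
  ring

section DualDomain

variable {T : ℝ} {g g₁ g₂ g₃ g₂₃ : ℝ → ℝ → ℝ → ℝ}

theorem ContinuousOn.slice_fst {g : ℝ → ℝ → ℝ → ℝ} {A : Set ℝ} {B : Set (ℝ × ℝ)}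
    (hg : ContinuousOn (fun p : ℝ × ℝ × ℝ => g p.1 p.2.1 p.2.2) (A ×ˢ B)) {t : ℝ} (ht : t ∈ A) :
    ContinuousOn (uncurry (g t)) B :=
  hg.comp (continuous_const.prodMk continuous_id).continuousOn fun _ hp => ⟨ht, hp⟩

theorem hasDerivAt_comp_slice_yz
    (h₂ : ∀ t y z : ℝ, 0 ≤ t → t < T → 0 < y → y < 1 → 0 < z →
      HasDerivAt (fun y' => g t y' z) (g₂ t y z) y)
    (h₃ : ∀ t y z : ℝ, 0 ≤ t → t < T → 0 < y → y < 1 → 0 < z →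
      HasDerivAt (fun z' => g t y z') (g₃ t y z) z)
    (hc₂ : ContinuousOn (fun p : ℝ × ℝ × ℝ => g₂ p.1 p.2.1 p.2.2) (Ico 0 T ×ˢ Ioo 0 1 ×ˢ Ioi 0))
    (hc₃ : ContinuousOn (fun p : ℝ × ℝ × ℝ => g₃ p.1 p.2.1 p.2.2) (Ico 0 T ×ˢ Ioo 0 1 ×ˢ Ioi 0))
    {t z γ' : ℝ} {γ : ℝ → ℝ} (ht : t ∈ Ico 0 T) (hz : 0 < z) (hγ : HasDerivAt γ γ' z)
    (hγz : γ z ∈ Ioo 0 1) :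
    HasDerivAt (fun s => g t (γ s) s) (g₃ t (γ z) z + g₂ t (γ z) z * γ') z := by
  have := HasDerivAt.comp_of_continuousOn_partials (f := g t) (isOpen_Ioo.prod isOpen_Ioi)
    (fun p hp => h₂ t p.1 p.2 ht.1 ht.2 hp.1.1 hp.1.2 hp.2)
    (fun p hp => h₃ t p.1 p.2 ht.1 ht.2 hp.1.1 hp.1.2 hp.2) (hc₂.slice_fst ht) (hc₃.slice_fst ht)
    hγ (hasDerivAt_id z) ⟨hγz, hz⟩
  simpa only [id, mul_one, add_comm] using this

theorem hasDerivAt_comp_slice_ty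
    (h₁ : ∀ t y z : ℝ, 0 ≤ t → t < T → 0 < y → y < 1 → 0 < z →
      HasDerivAt (fun t' => g t' y z) (g₁ t y z) t)
    (h₂ : ∀ t y z : ℝ, 0 ≤ t → t < T → 0 < y → y < 1 → 0 < z →
      HasDerivAt (fun y' => g t y' z) (g₂ t y z) y)
    (hc₁ : ContinuousOn (fun p : ℝ × ℝ × ℝ => g₁ p.1 p.2.1 p.2.2) (Ico 0 T ×ˢ Ioo 0 1 ×ˢ Ioi 0))
    (hc₂ : ContinuousOn (fun p : ℝ × ℝ × ℝ => g₂ p.1 p.2.1 p.2.2) (Ico 0 T ×ˢ Ioo 0 1 ×ˢ Ioi 0))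
    {t z γ' : ℝ} {γ : ℝ → ℝ} (ht : t ∈ Ioo 0 T) (hz : 0 < z) (hγ : HasDerivAt γ γ' t)
    (hγt : γ t ∈ Ioo 0 1) :
    HasDerivAt (fun s => g s (γ s) z) (g₁ t (γ t) z + g₂ t (γ t) z * γ') t := by
  have hslice : ∀ {h : ℝ → ℝ → ℝ → ℝ}, ContinuousOn (fun p : ℝ × ℝ × ℝ => h p.1 p.2.1 p.2.2)
      (Ico 0 T ×ˢ Ioo 0 1 ×ˢ Ioi 0) →
      ContinuousOn (uncurry fun s w => h s w z) (Ioo 0 T ×ˢ Ioo 0 1) :=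
    fun hh => hh.comp (by fun_prop : Continuous fun p : ℝ × ℝ => (p.1, p.2, z)).continuousOn
      fun p hp => ⟨Ioo_subset_Ico_self hp.1, hp.2, hz⟩
  have := HasDerivAt.comp_of_continuousOn_partials (f := fun s w => g s w z)
    (isOpen_Ioo.prod isOpen_Ioo)
    (fun p hp => h₁ p.1 p.2 z hp.1.1.le hp.1.2 hp.2.1 hp.2.2 hz)
    (fun p hp => h₂ p.1 p.2 z hp.1.1.le hp.1.2 hp.2.1 hp.2.2 hz) (hslice hc₁) (hslice hc₂)
    (hasDerivAt_id t) hγ ⟨ht, hγt⟩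
  simpa only [id, mul_one] using this

theorem hasDerivAt_slice_swap
    (h₂ : ∀ t y z : ℝ, 0 ≤ t → t < T → 0 < y → y < 1 → 0 < z →
      HasDerivAt (fun y' => g t y' z) (g₂ t y z) y)
    (h₃ : ∀ t y z : ℝ, 0 ≤ t → t < T → 0 < y → y < 1 → 0 < z →
      HasDerivAt (fun z' => g t y z') (g₃ t y z) z)
    (h₂₃ : ∀ t y z : ℝ, 0 ≤ t → t < T → 0 < y → y < 1 → 0 < z →
      HasDerivAt (fun z' => g₂ t y z') (g₂₃ t y z) z)
    (hc₂ : ContinuousOn (fun p : ℝ × ℝ × ℝ => g₂ p.1 p.2.1 p.2.2) (Ico 0 T ×ˢ Ioo 0 1 ×ˢ Ioi 0))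
    (hc₂₃ : ContinuousOn (fun p : ℝ × ℝ × ℝ => g₂₃ p.1 p.2.1 p.2.2)
      (Ico 0 T ×ˢ Ioo 0 1 ×ˢ Ioi 0)) :
    ∀ t y z : ℝ, 0 ≤ t → t < T → 0 < y → y < 1 → 0 < z →
      HasDerivAt (fun y' => g₃ t y' z) (g₂₃ t y z) y := by
  intro t y z ht0 htT hy0 hy1 hz
  exact hasDerivAt_partial_swap (f := g t) (p := (y, z)) (isOpen_Ioo.prod isOpen_Ioi)
    (fun p hp => h₂ t p.1 p.2 ht0 htT hp.1.1 hp.1.2 hp.2)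
    (fun p hp => h₃ t p.1 p.2 ht0 htT hp.1.1 hp.1.2 hp.2)
    (fun p hp => h₂₃ t p.1 p.2 ht0 htT hp.1.1 hp.1.2 hp.2)
    (hc₂.slice_fst ⟨ht0, htT⟩) (hc₂₃.slice_fst ⟨ht0, htT⟩) ⟨⟨hy0, hy1⟩, hz⟩

end DualDomain

theorem primal_hjb_of_dual {μ σ σZ μZ ρ lam η Ft x y z A B C Ut Uz Uxx Uxz Uzz V : ℝ}
    (hA : A ≠ 0) (hUxx : Uxx = -1 / A) (hUxz : Uxz = -B / A) (hUzz : Uzz = C + B * Uxz)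
    (hdual : Ut + (μ^2/(2*σ^2)) * y^2 * A - (μ*σZ/σ) * z * y * B + (1/2) * σZ^2 * z^2 * C
      + ρ * y * -x + μZ * z * Uz - ((1-lam)*η*z + lam * Ft) * y = ρ * V) :
    Ut - (μ^2/(2*σ^2)) * y^2 / Uxx - (μ*σZ*z/σ) * y * Uxz / Uxx
      + (1/2) * σZ^2 * z^2 * (Uzz - Uxz^2 / Uxx) + μZ * z * Uz
      - ((1-lam)*η*z + lam * Ft) * y = ρ * (V + x * y) := by
  subst hUxx hUxz hUzz
  field_simp
  linear_combination (2 * A) * hdual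

theorem stmt_6_general (T ρ μ σ σZ μZ lam η : ℝ)
    (F : ℝ → ℝ)
    (uhat ut uy uz uyy uyz uzz : ℝ → ℝ → ℝ → ℝ)
    -- û has partial derivatives ut, uy, uz, uyy, uyz, uzz on D = [0,T) × (0,1) × (0,∞):
    (hut : ∀ t y z : ℝ, 0 ≤ t → t < T → 0 < y → y < 1 → 0 < z →
      HasDerivAt (fun t' => uhat t' y z) (ut t y z) t)
    (huy : ∀ t y z : ℝ, 0 ≤ t → t < T → 0 < y → y < 1 → 0 < z →
      HasDerivAt (fun y' => uhat t y' z) (uy t y z) y)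
    (huz : ∀ t y z : ℝ, 0 ≤ t → t < T → 0 < y → y < 1 → 0 < z →
      HasDerivAt (fun z' => uhat t y z') (uz t y z) z)
    (huyy : ∀ t y z : ℝ, 0 ≤ t → t < T → 0 < y → y < 1 → 0 < z →
      HasDerivAt (fun y' => uy t y' z) (uyy t y z) y)
    (huyz : ∀ t y z : ℝ, 0 ≤ t → t < T → 0 < y → y < 1 → 0 < z →
      HasDerivAt (fun z' => uy t y z') (uyz t y z) z)
    (huzz : ∀ t y z : ℝ, 0 ≤ t → t < T → 0 < y → y < 1 → 0 < z →
      HasDerivAt (fun z' => uz t y z') (uzz t y z) z)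
    -- these partial derivatives are continuous on D:
    (hutc : ContinuousOn (fun p : ℝ × ℝ × ℝ => ut p.1 p.2.1 p.2.2)
      (Set.Ico 0 T ×ˢ Set.Ioo 0 1 ×ˢ Set.Ioi 0))
    (huyc : ContinuousOn (fun p : ℝ × ℝ × ℝ => uy p.1 p.2.1 p.2.2)
      (Set.Ico 0 T ×ˢ Set.Ioo 0 1 ×ˢ Set.Ioi 0))
    (huzc : ContinuousOn (fun p : ℝ × ℝ × ℝ => uz p.1 p.2.1 p.2.2)
      (Set.Ico 0 T ×ˢ Set.Ioo 0 1 ×ˢ Set.Ioi 0))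
    (huyyc : ContinuousOn (fun p : ℝ × ℝ × ℝ => uyy p.1 p.2.1 p.2.2)
      (Set.Ico 0 T ×ˢ Set.Ioo 0 1 ×ˢ Set.Ioi 0))
    (huyzc : ContinuousOn (fun p : ℝ × ℝ × ℝ => uyz p.1 p.2.1 p.2.2)
      (Set.Ico 0 T ×ˢ Set.Ioo 0 1 ×ˢ Set.Ioi 0))
    (huzzc : ContinuousOn (fun p : ℝ × ℝ × ℝ => uzz p.1 p.2.1 p.2.2)
      (Set.Ico 0 T ×ˢ Set.Ioo 0 1 ×ˢ Set.Ioi 0))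
    -- strict convexity: û_yy > 0 on D:
    (huyypos : ∀ t y z : ℝ, 0 ≤ t → t < T → 0 < y → y < 1 → 0 < z → 0 < uyy t y z)
    -- û satisfies the dual PDE on D:
    (hdual : ∀ t y z : ℝ, 0 ≤ t → t < T → 0 < y → y < 1 → 0 < z →
      ut t y z + (μ^2/(2*σ^2)) * y^2 * uyy t y z - (μ*σZ/σ) * z * y * uyz t y z
        + (1/2) * σZ^2 * z^2 * uzz t y z + ρ * y * uy t y z + μZ * z * uz t y z
        - ((1-lam)*η*z + lam * F t) * y = ρ * uhat t y z)
    -- the open set O and the interior minimizer y*: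
    (O : Set (ℝ × ℝ × ℝ)) (hOopen : IsOpen O)
    (hOsub : O ⊆ {p : ℝ × ℝ × ℝ | 0 ≤ p.1 ∧ p.1 < T ∧ 0 < p.2.1 ∧ 0 < p.2.2})
    (ystar yst ysx ysz : ℝ → ℝ → ℝ → ℝ)
    (hysrange : ∀ t x z : ℝ, (t, x, z) ∈ O → ystar t x z ∈ Set.Ioo (0:ℝ) 1)
    -- y* is C¹ in t and C² in (x,z) on O:
    (hyst : ∀ t x z : ℝ, (t, x, z) ∈ O → HasDerivAt (fun t' => ystar t' x z) (yst t x z) t)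
    (hysx : ∀ t x z : ℝ, (t, x, z) ∈ O → HasDerivAt (fun x' => ystar t x' z) (ysx t x z) x)
    (hysz : ∀ t x z : ℝ, (t, x, z) ∈ O → HasDerivAt (fun z' => ystar t x z') (ysz t x z) z)
    -- the first-order condition û_y(t, y*(t,x,z), z) = −x on O:
    (hfoc : ∀ t x z : ℝ, (t, x, z) ∈ O → uy t (ystar t x z) z = -x)
    -- the primal candidate value function:
    (u : ℝ → ℝ → ℝ → ℝ)
    (hu : ∀ t x z : ℝ, u t x z = uhat t (ystar t x z) z + x * ystar t x z) :
    ∀ t x z : ℝ, (t, x, z) ∈ O →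
      pd2 u t x z = ystar t x z ∧
      pd2 (pd2 u) t x z = -1 / uyy t (ystar t x z) z ∧
      pd2 (pd2 u) t x z < 0 ∧
      pd1 u t x z - (μ^2/(2*σ^2)) * (pd2 u t x z)^2 / pd2 (pd2 u) t x z
        - (μ*σZ*z/σ) * pd2 u t x z * pd3 (pd2 u) t x z / pd2 (pd2 u) t x z
        + (1/2) * σZ^2 * z^2 * (pd3 (pd3 u) t x z - (pd3 (pd2 u) t x z)^2 / pd2 (pd2 u) t x z)
        + μZ * z * pd3 u t x z - ((1-lam)*η*z + lam * F t) * pd2 u t x z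
        = ρ * u t x z := by
  intro t x z hO
  obtain ⟨ht0, htT, -, hz⟩ := hOsub hO
  have ht : t ∈ Ioo 0 T := ⟨hOopen.fst_pos (fun p hp => (hOsub hp).1) hO, htT⟩
  have hy := hysrange t x z hO
  have hD : ∀ {P : ℝ → ℝ → ℝ → Prop},
      (∀ t y z : ℝ, 0 ≤ t → t < T → 0 < y → y < 1 → 0 < z → P t y z) →
      ∀ {x' z'}, (t, x', z') ∈ O → P t (ystar t x' z') z' := fun hP _ _ hO' =>
    hP _ _ _ ht0 htT (hysrange _ _ _ hO').1 (hysrange _ _ _ hO').2 (hOsub hO').2.2.2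
  have hA : 0 < uyy t (ystar t x z) z := hD huyypos hO
  have hOx : ∀ᶠ x' in 𝓝 x, (t, x', z) ∈ O :=
    (by fun_prop : Continuous fun x' => (t, x', z)).continuousAt.eventually_mem
      (hOopen.mem_nhds hO)
  have hOz : ∀ᶠ z' in 𝓝 z, (t, x, z') ∈ O :=
    (by fun_prop : Continuous fun z' => (t, x, z')).continuousAt.eventually_mem
      (hOopen.mem_nhds hO)
  have hu_x : ∀ {x' z'}, (t, x', z') ∈ O → HasDerivAt (u t · z') (ystar t x' z') x' :=
    fun hO' => by simpa only [hu] using (hfoc _ _ _ hO' ▸ hD huy hO').legendre (hysx _ _ _ hO')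
  have hu_z : ∀ {z'}, (t, x, z') ∈ O → HasDerivAt (u t x ·) (uz t (ystar t x z') z') z' :=
    fun hO' => by
      simpa only [hu] using (hasDerivAt_comp_slice_yz huy huz huyc huzc ⟨ht0, htT⟩
        (hOsub hO').2.2.2 (hysz _ _ _ hO') (hysrange _ _ _ hO')).add_mul_of_eq_neg
          (hysz _ _ _ hO') (hfoc _ _ _ hO')
  have hu_t : HasDerivAt (u · x z) (ut t (ystar t x z) z) t := by
    simpa only [hu] using (hasDerivAt_comp_slice_ty hut huy hutc huyc ht hz (hyst t x z hO)
      hy).add_mul_of_eq_neg (hyst t x z hO) (hfoc t x z hO)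
  have hysx_eq : ysx t x z = -1 / uyy t (ystar t x z) z := by
    rw [eq_div_iff hA.ne', mul_comm]
    exact ((hD huyy hO).comp x (hysx t x z hO) :).unique
      ((hasDerivAt_neg x).congr_of_eventuallyEq (hOx.mono fun _ => hfoc _ _ _))
  have hysz_eq : ysz t x z = -uyz t (ystar t x z) z / uyy t (ystar t x z) z := by
    rw [eq_div_iff hA.ne', mul_comm]
    refine eq_neg_of_add_eq_zero_right ?_
    exact (hasDerivAt_comp_slice_yz huyy huyz huyyc huyzc ⟨ht0, htT⟩ hz (hysz t x z hO)
      hy).unique ((hasDerivAt_const z (-x)).congr_of_eventuallyEq (hOz.mono fun _ => hfoc _ _ _))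
  have hu_zz : HasDerivAt (fun z' => uz t (ystar t x z') z')
      (uzz t (ystar t x z) z + uyz t (ystar t x z) z * ysz t x z) z :=
    hasDerivAt_comp_slice_yz (hasDerivAt_slice_swap huy huz huyz huyc huyzc) huzz huyzc huzzc
      ⟨ht0, htT⟩ hz (hysz t x z hO) hy
  have hxx : pd2 (pd2 u) t x z = ysx t x z :=
    ((hysx t x z hO).congr_of_eventuallyEq (hOx.mono fun _ hO' => (hu_x hO').deriv)).deriv
  have hxz : pd3 (pd2 u) t x z = ysz t x z :=
    ((hysz t x z hO).congr_of_eventuallyEq (hOz.mono fun _ hO' => (hu_x hO').deriv)).deriv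
  have hzz : pd3 (pd3 u) t x z = uzz t (ystar t x z) z + uyz t (ystar t x z) z * ysz t x z :=
    (hu_zz.congr_of_eventuallyEq (hOz.mono fun _ hO' => (hu_z hO').deriv)).deriv
  have hx : pd2 u t x z = ystar t x z := (hu_x hO).deriv
  refine ⟨hx, hxx.trans hysx_eq, hxx ▸ hysx_eq ▸ div_neg_of_neg_of_pos (by norm_num) hA, ?_⟩
  rw [show pd1 u t x z = _ from hu_t.deriv, show pd3 u t x z = _ from (hu_z hO).deriv, hx, hu]
  exact primal_hjb_of_dual hA.ne' (hxx.trans hysx_eq) (hxz.trans hysz_eq)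
    (hzz.trans (by rw [hxz])) (hfoc t x z hO ▸ hD hdual hO)

/-- Legendre–Fenchel duality: if `û` is a strictly convex classical solution of
the dual PDE on `D = [0,T) × (0,1) × (0,∞)` and `y*` solves `û_y(t, y*(t,x,z), z) = −x` on an
open set `O`, then `u(t,x,z) = û(t, y*(t,x,z), z) + x y*(t,x,z)` satisfies `u_x = y*`,
`u_xx = −1/û_yy < 0`, and the primal nonlinear HJB equation on `O`. -/
theorem stmt_6 (T ρ μ σ σZ μZ lam η : ℝ) (hT : 0 < T)
    (hμ : 0 < μ) (hσ : 0 < σ) (hσZ : 0 < σZ) (hμZ : 0 < μZ)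
    (hlam : lam ∈ Set.Icc (0:ℝ) 1) (hη : η = (μZ * σ - μ * σZ) / σ)
    (F : ℝ → ℝ) (hF : ContinuousOn F (Set.Icc 0 T))
    (uhat ut uy uz uyy uyz uzz : ℝ → ℝ → ℝ → ℝ)
    -- û has partial derivatives ut, uy, uz, uyy, uyz, uzz on D = [0,T) × (0,1) × (0,∞):
    (hut : ∀ t y z : ℝ, 0 ≤ t → t < T → 0 < y → y < 1 → 0 < z →
      HasDerivAt (fun t' => uhat t' y z) (ut t y z) t)
    (huy : ∀ t y z : ℝ, 0 ≤ t → t < T → 0 < y → y < 1 → 0 < z →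
      HasDerivAt (fun y' => uhat t y' z) (uy t y z) y)
    (huz : ∀ t y z : ℝ, 0 ≤ t → t < T → 0 < y → y < 1 → 0 < z →
      HasDerivAt (fun z' => uhat t y z') (uz t y z) z)
    (huyy : ∀ t y z : ℝ, 0 ≤ t → t < T → 0 < y → y < 1 → 0 < z →
      HasDerivAt (fun y' => uy t y' z) (uyy t y z) y)
    (huyz : ∀ t y z : ℝ, 0 ≤ t → t < T → 0 < y → y < 1 → 0 < z →
      HasDerivAt (fun z' => uy t y z') (uyz t y z) z)
    (huzz : ∀ t y z : ℝ, 0 ≤ t → t < T → 0 < y → y < 1 → 0 < z →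
      HasDerivAt (fun z' => uz t y z') (uzz t y z) z)
    -- these partial derivatives are continuous on D:
    (hutc : ContinuousOn (fun p : ℝ × ℝ × ℝ => ut p.1 p.2.1 p.2.2)
      (Set.Ico 0 T ×ˢ Set.Ioo 0 1 ×ˢ Set.Ioi 0))
    (huyc : ContinuousOn (fun p : ℝ × ℝ × ℝ => uy p.1 p.2.1 p.2.2)
      (Set.Ico 0 T ×ˢ Set.Ioo 0 1 ×ˢ Set.Ioi 0))
    (huzc : ContinuousOn (fun p : ℝ × ℝ × ℝ => uz p.1 p.2.1 p.2.2)
      (Set.Ico 0 T ×ˢ Set.Ioo 0 1 ×ˢ Set.Ioi 0))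
    (huyyc : ContinuousOn (fun p : ℝ × ℝ × ℝ => uyy p.1 p.2.1 p.2.2)
      (Set.Ico 0 T ×ˢ Set.Ioo 0 1 ×ˢ Set.Ioi 0))
    (huyzc : ContinuousOn (fun p : ℝ × ℝ × ℝ => uyz p.1 p.2.1 p.2.2)
      (Set.Ico 0 T ×ˢ Set.Ioo 0 1 ×ˢ Set.Ioi 0))
    (huzzc : ContinuousOn (fun p : ℝ × ℝ × ℝ => uzz p.1 p.2.1 p.2.2)
      (Set.Ico 0 T ×ˢ Set.Ioo 0 1 ×ˢ Set.Ioi 0))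
    -- strict convexity: û_yy > 0 on D:
    (huyypos : ∀ t y z : ℝ, 0 ≤ t → t < T → 0 < y → y < 1 → 0 < z → 0 < uyy t y z)
    -- û satisfies the dual PDE on D:
    (hdual : ∀ t y z : ℝ, 0 ≤ t → t < T → 0 < y → y < 1 → 0 < z →
      ut t y z + (μ^2/(2*σ^2)) * y^2 * uyy t y z - (μ*σZ/σ) * z * y * uyz t y z
        + (1/2) * σZ^2 * z^2 * uzz t y z + ρ * y * uy t y z + μZ * z * uz t y z
        - ((1-lam)*η*z + lam * F t) * y = ρ * uhat t y z)
    -- the open set O and the interior minimizer y*: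
    (O : Set (ℝ × ℝ × ℝ)) (hOopen : IsOpen O)
    (hOsub : O ⊆ {p : ℝ × ℝ × ℝ | 0 ≤ p.1 ∧ p.1 < T ∧ 0 < p.2.1 ∧ 0 < p.2.2})
    (ystar yst ysx ysz ysxx ysxz yszz : ℝ → ℝ → ℝ → ℝ)
    (hysrange : ∀ t x z : ℝ, (t, x, z) ∈ O → ystar t x z ∈ Set.Ioo (0:ℝ) 1)
    -- y* is C¹ in t and C² in (x,z) on O:
    (hyst : ∀ t x z : ℝ, (t, x, z) ∈ O → HasDerivAt (fun t' => ystar t' x z) (yst t x z) t)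
    (hysx : ∀ t x z : ℝ, (t, x, z) ∈ O → HasDerivAt (fun x' => ystar t x' z) (ysx t x z) x)
    (hysz : ∀ t x z : ℝ, (t, x, z) ∈ O → HasDerivAt (fun z' => ystar t x z') (ysz t x z) z)
    (hysxx : ∀ t x z : ℝ, (t, x, z) ∈ O → HasDerivAt (fun x' => ysx t x' z) (ysxx t x z) x)
    (hysxz : ∀ t x z : ℝ, (t, x, z) ∈ O → HasDerivAt (fun z' => ysx t x z') (ysxz t x z) z)
    (hyszz : ∀ t x z : ℝ, (t, x, z) ∈ O → HasDerivAt (fun z' => ysz t x z') (yszz t x z) z)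
    (hystc : ContinuousOn (fun p : ℝ × ℝ × ℝ => yst p.1 p.2.1 p.2.2) O)
    (hysxc : ContinuousOn (fun p : ℝ × ℝ × ℝ => ysx p.1 p.2.1 p.2.2) O)
    (hyszc : ContinuousOn (fun p : ℝ × ℝ × ℝ => ysz p.1 p.2.1 p.2.2) O)
    (hysxxc : ContinuousOn (fun p : ℝ × ℝ × ℝ => ysxx p.1 p.2.1 p.2.2) O)
    (hysxzc : ContinuousOn (fun p : ℝ × ℝ × ℝ => ysxz p.1 p.2.1 p.2.2) O)
    (hyszzc : ContinuousOn (fun p : ℝ × ℝ × ℝ => yszz p.1 p.2.1 p.2.2) O)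
    -- the first-order condition û_y(t, y*(t,x,z), z) = −x on O:
    (hfoc : ∀ t x z : ℝ, (t, x, z) ∈ O → uy t (ystar t x z) z = -x)
    -- the primal candidate value function:
    (u : ℝ → ℝ → ℝ → ℝ)
    (hu : ∀ t x z : ℝ, u t x z = uhat t (ystar t x z) z + x * ystar t x z) :
    ∀ t x z : ℝ, (t, x, z) ∈ O →
      pd2 u t x z = ystar t x z ∧
      pd2 (pd2 u) t x z = -1 / uyy t (ystar t x z) z ∧
      pd2 (pd2 u) t x z < 0 ∧
      pd1 u t x z - (μ^2/(2*σ^2)) * (pd2 u t x z)^2 / pd2 (pd2 u) t x z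
        - (μ*σZ*z/σ) * pd2 u t x z * pd3 (pd2 u) t x z / pd2 (pd2 u) t x z
        + (1/2) * σZ^2 * z^2 * (pd3 (pd3 u) t x z - (pd3 (pd2 u) t x z)^2 / pd2 (pd2 u) t x z)
        + μZ * z * pd3 u t x z - ((1-lam)*η*z + lam * F t) * pd2 u t x z
        = ρ * u t x z :=
  stmt_6_general T ρ μ σ σZ μZ lam η F uhat ut uy uz uyy uyz uzz hut huy huz huyy huyz huzz hutc
    huyc huzc huyyc huyzc huzzc huyypos hdual O hOopen hOsub ystar yst ysx ysz hysrange hyst hysx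
    hysz hfoc u hu
end

section
/- Let μ, σ, ρ > 0, let 0 ≤ t < T, and let f : [0,T] → ℝ be continuous with f(s) ≥ 0 for all s ∈ [0,T]. Then lim_{r→∞} ∫_t^T ∫_{−∞}^r e^{−ρs + x} φ(s−t, x, r) f(s) dx ds = 0. -/
/-!
Write `a = σ̃²` and `β = 1 + μ̃/σ̃`, so that `e^x φ(τ, x, r)` has prefactor `2(2r − x)/(a√(2aπτ³))`
and exponent at most `βx − (2r − x)²/(2aτ)`. On `x < r` we have `2r − x > r`, and completing the
square bounds this exponent by `2βr + β²aτ − r²/(8aτ) − (2r − x)²/(8aτ)`; the Gaussian first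
moment `∫_{x<r} (2r − x) e^{−(2r−x)²/(8aτ)} dx = 4aτ e^{−r²/(8aτ)}` then bounds the inner integral
by `8τ/√(2aπτ³) · e^{2βr + β²aτ − r²/(4aτ)}`. A factor `e^{−1/(8aτ)}` of the exponential absorbs
the `τ^{−1/2}` singularity of the prefactor, which leaves `8 e^{2βr + β²aL − r²/(8aL)}` uniformly
for `0 < τ ≤ L = T − t`. As `f` is bounded on `[0, T]`, the double integral is
`O(e^{2βr − r²/(8aL)})`, which tends to `0`.
-/

/-- The density-type kernel `φ(s,x,y)` from the paper, with `μ̃ = μ/(2σ) − σρ/μ` and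
`σ̃ = −μ/σ`. -/
noncomputable def phi (μ σ ρ : ℝ) (s x y : ℝ) : ℝ :=
  (2 * (2*y - x)) / ((-(μ/σ))^2 * Real.sqrt (2 * (-(μ/σ))^2 * Real.pi * s^3)) *
    Real.exp ((μ/(2*σ) - σ*ρ/μ) / (-(μ/σ)) * x - (1/2) * (μ/(2*σ) - σ*ρ/μ)^2 * s
      - (2*y - x)^2 / (2 * (-(μ/σ))^2 * s))

open MeasureTheory Set Filter Real Topology Interval

lemma integrable_sub_mul_exp_neg_sq_div (b : ℝ) {c : ℝ} (hc : 0 < c) :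
    Integrable fun x : ℝ => (b - x) * exp (-(b - x) ^ 2 / c) := by
  refine ((integrable_mul_exp_neg_mul_sq (inv_pos.mpr hc)).comp_sub_left b).congr
    (Eventually.of_forall fun x => ?_)
  simp only [neg_mul, mul_neg, div_eq_inv_mul]

lemma integral_Iio_sub_mul_exp_neg_sq_div (a b : ℝ) {c : ℝ} (hc : 0 < c) :
    ∫ x in Iio a, (b - x) * exp (-(b - x) ^ 2 / c) = c / 2 * exp (-(b - a) ^ 2 / c) := by
  have hderiv : ∀ x, HasDerivAt (fun x => c / 2 * exp (-(b - x) ^ 2 / c))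
      ((b - x) * exp (-(b - x) ^ 2 / c)) x := by
    intro x
    have hsub : HasDerivAt (fun x => b - x) (-1) x := by
      simpa using (hasDerivAt_id x).const_sub b
    refine (((hsub.fun_pow 2).fun_neg.div_const c).exp.const_mul (c / 2)).congr_deriv ?_
    field_simp
    ring
  have hlim : Tendsto (fun x => c / 2 * exp (-(b - x) ^ 2 / c)) atBot (𝓝 0) := by
    have hsub : Tendsto (fun x : ℝ => b - x) atBot atTop := by
      simpa only [sub_eq_add_neg] using
        tendsto_atTop_add_const_left atBot b tendsto_neg_atBot_atTop
    have hexpo : Tendsto (fun x : ℝ => -(b - x) ^ 2 / c) atBot atBot :=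
      (tendsto_neg_atTop_atBot.comp ((tendsto_pow_atTop two_ne_zero).comp hsub)).atBot_div_const hc
    simpa using (tendsto_exp_atBot.comp hexpo).const_mul (c / 2)
  rw [← integral_Iic_eq_integral_Iio, integral_Iic_of_hasDerivAt_of_tendsto'
    (fun x _ => hderiv x) (integrable_sub_mul_exp_neg_sq_div b hc).integrableOn hlim, sub_zero]

lemma div_sqrt_mul_exp_neg_inv_le {c τ : ℝ} (hc : 0 < c) (hτ : 0 < τ) :
    τ / √(2 * c * π * τ ^ 3) * exp (-(1 / (8 * c * τ))) ≤ 1 := by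
  have hsqrt : √(2 * c * π * τ ^ 3) = τ * √(2 * c * π * τ) := by
    rw [show 2 * c * π * τ ^ 3 = τ ^ 2 * (2 * c * π * τ) by ring, sqrt_mul (by positivity),
      sqrt_sq hτ.le]
  have hexp : exp (-(1 / (8 * c * τ))) ≤ √(2 * c * π * τ) := by
    rw [le_sqrt (exp_pos _).le (by positivity), ← exp_nat_mul]
    have hmul : 1 / (4 * c * τ) * exp (-(1 / (4 * c * τ))) ≤ 1 :=
      (mul_exp_neg_le_exp_neg_one _).trans (exp_le_one_iff.mpr (by norm_num))
    rw [one_div_mul_eq_div, div_le_one (by positivity)] at hmul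
    calc exp (((2 : ℕ) : ℝ) * -(1 / (8 * c * τ))) = exp (-(1 / (4 * c * τ))) := by
          congr 1; field_simp; norm_num
      _ ≤ 4 * c * τ := hmul
      _ ≤ 2 * c * π * τ := by nlinarith [pi_gt_three, mul_pos hc hτ]
  rw [hsqrt, ← div_div, div_self hτ.ne', one_div_mul_eq_div, div_le_one (by positivity)]
  exact hexp

lemma mul_sub_sq_div_le (β : ℝ) {P r x : ℝ} (hP : 0 < P) (hr : 0 ≤ r) (hx : x ≤ r) :
    β * x - (2 * r - x) ^ 2 / (2 * P)
      ≤ 2 * β * r + β ^ 2 * P - r ^ 2 / (8 * P) - (2 * r - x) ^ 2 / (8 * P) := by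
  have hsq : r ^ 2 ≤ (2 * r - x) ^ 2 := pow_le_pow_left₀ hr (by linarith) 2
  have hamgm : 0 ≤ (2 * r - x + 2 * β * P) ^ 2 / (4 * P) := by positivity
  have hdiff : 0 ≤ ((2 * r - x) ^ 2 - r ^ 2) / (8 * P) := div_nonneg (by linarith) (by positivity)
  have key : 2 * β * r + β ^ 2 * P - r ^ 2 / (8 * P) - (2 * r - x) ^ 2 / (8 * P)
      - (β * x - (2 * r - x) ^ 2 / (2 * P))
      = (2 * r - x + 2 * β * P) ^ 2 / (4 * P) + ((2 * r - x) ^ 2 - r ^ 2) / (8 * P) := by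
    field_simp
    ring
  linarith

lemma tendsto_exp_mul_add_sub_sq_div (p q : ℝ) {c : ℝ} (hc : 0 < c) :
    Tendsto (fun r => exp (p * r + q - r ^ 2 / c)) atTop (𝓝 0) := by
  have hlin : Tendsto (fun r => p - r / c) atTop atBot := by
    simpa only [sub_eq_add_neg, neg_div] using tendsto_atBot_add_const_left atTop p
      (tendsto_neg_atTop_atBot.atBot_div_const hc)
  have hquad : Tendsto (fun r => r * (p - r / c) + q) atTop atBot :=
    tendsto_atBot_add_const_right _ q (tendsto_id.atTop_mul_atBot₀ hlin)
  refine tendsto_exp_atBot.comp (hquad.congr fun r => ?_)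
  ring

/-- `σ̃²`, the variance parameter of the kernel `phi`. -/
noncomputable def phiVar (μ σ : ℝ) : ℝ := (-(μ / σ)) ^ 2

/-- `1 + μ̃/σ̃`: the rate of the exponential in `x` of `exp x * phi μ σ ρ s x y`. -/
noncomputable def phiRate (μ σ ρ : ℝ) : ℝ := 1 + (μ / (2 * σ) - σ * ρ / μ) / (-(μ / σ))

lemma phiVar_pos {μ σ : ℝ} (hμ : μ ≠ 0) (hσ : σ ≠ 0) : 0 < phiVar μ σ := by
  unfold phiVar
  exact sq_pos_iff.mpr (neg_ne_zero.mpr (div_ne_zero hμ hσ))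

lemma norm_exp_mul_phi_le (μ σ ρ : ℝ) {s x y : ℝ} (hs : 0 ≤ s) (hx : x ≤ 2 * y) :
    ‖exp x * phi μ σ ρ s x y‖ ≤ 2 * (2 * y - x) / (phiVar μ σ * √(2 * phiVar μ σ * π * s ^ 3))
      * exp (phiRate μ σ ρ * x - (2 * y - x) ^ 2 / (2 * phiVar μ σ * s)) := by
  unfold phi phiVar phiRate
  have hfac : 0 ≤ 2 * (2 * y - x) / ((-(μ / σ)) ^ 2 * √(2 * (-(μ / σ)) ^ 2 * π * s ^ 3)) :=
    div_nonneg (by linarith) (by positivity)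
  rw [Real.norm_eq_abs, abs_of_nonneg (mul_nonneg (exp_pos x).le (mul_nonneg hfac (exp_pos _).le)),
    mul_left_comm, ← exp_add]
  gcongr
  nlinarith [sq_nonneg (μ / (2 * σ) - σ * ρ / μ)]

lemma norm_exp_mul_phi_le_gaussian {μ σ : ℝ} (ρ : ℝ) (hμ : μ ≠ 0) (hσ : σ ≠ 0) {τ r x : ℝ}
    (hτ : 0 < τ) (hr : 0 ≤ r) (hx : x ≤ r) :
    ‖exp x * phi μ σ ρ τ x r‖
      ≤ 2 / (phiVar μ σ * √(2 * phiVar μ σ * π * τ ^ 3))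
          * exp (2 * phiRate μ σ ρ * r + phiRate μ σ ρ ^ 2 * (phiVar μ σ * τ)
            - r ^ 2 / (8 * (phiVar μ σ * τ)))
          * ((2 * r - x) * exp (-(2 * r - x) ^ 2 / (8 * (phiVar μ σ * τ)))) := by
  have ha := phiVar_pos hμ hσ
  have hsq := mul_sub_sq_div_le (phiRate μ σ ρ) (mul_pos ha hτ) hr hx
  rw [← mul_assoc 2 (phiVar μ σ) τ] at hsq
  refine (norm_exp_mul_phi_le μ σ ρ hτ.le (by linarith)).trans ?_
  set E := 2 * phiRate μ σ ρ * r + phiRate μ σ ρ ^ 2 * (phiVar μ σ * τ)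
    - r ^ 2 / (8 * (phiVar μ σ * τ))
  grw [hsq]
  · rw [exp_sub E, neg_div, exp_neg]
    exact le_of_eq (by ring)
  · exact div_nonneg (by linarith) (by positivity)

lemma norm_integral_Iio_exp_mul_phi_le {μ σ : ℝ} (ρ : ℝ) (hμ : μ ≠ 0) (hσ : σ ≠ 0)
    {τ r : ℝ} (hτ : 0 < τ) (hr : 0 ≤ r) :
    ‖∫ x in Iio r, exp x * phi μ σ ρ τ x r‖
      ≤ 8 * (τ / √(2 * phiVar μ σ * π * τ ^ 3))
          * exp (2 * phiRate μ σ ρ * r + phiRate μ σ ρ ^ 2 * (phiVar μ σ * τ)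
            - r ^ 2 / (8 * (phiVar μ σ * τ)) - r ^ 2 / (8 * (phiVar μ σ * τ))) := by
  have ha := phiVar_pos hμ hσ
  have haτ := mul_pos ha hτ
  refine (norm_integral_le_of_norm_le
    ((integrable_sub_mul_exp_neg_sq_div (2 * r) (by positivity)).integrableOn.const_mul _)
    ((ae_restrict_iff' measurableSet_Iio).mpr (Eventually.of_forall fun x hx =>
      norm_exp_mul_phi_le_gaussian ρ hμ hσ hτ hr (le_of_lt hx)))).trans_eq ?_
  set E := 2 * phiRate μ σ ρ * r + phiRate μ σ ρ ^ 2 * (phiVar μ σ * τ)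
    - r ^ 2 / (8 * (phiVar μ σ * τ))
  rw [integral_const_mul, integral_Iio_sub_mul_exp_neg_sq_div r (2 * r) (by positivity),
    show 2 * r - r = r by ring, exp_sub E, neg_div, exp_neg]
  field_simp

lemma norm_integral_Iio_exp_mul_phi_le_of_le {μ σ : ℝ} (ρ : ℝ) (hμ : μ ≠ 0) (hσ : σ ≠ 0) {τ L r : ℝ}
    (hτ : 0 < τ) (hτL : τ ≤ L) (hr : 1 ≤ r) :
    ‖∫ x in Iio r, exp x * phi μ σ ρ τ x r‖
      ≤ 8 * exp (2 * phiRate μ σ ρ * r + phiRate μ σ ρ ^ 2 * phiVar μ σ * L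
          - r ^ 2 / (8 * phiVar μ σ * L)) := by
  set a := phiVar μ σ
  set β := phiRate μ σ ρ
  have ha : 0 < a := phiVar_pos hμ hσ
  have hexpo : 2 * β * r + β ^ 2 * (a * τ) - r ^ 2 / (8 * (a * τ)) - r ^ 2 / (8 * (a * τ))
      ≤ -(1 / (8 * a * τ)) + (2 * β * r + β ^ 2 * a * L - r ^ 2 / (8 * a * L)) := by
    have h1 : β ^ 2 * (a * τ) ≤ β ^ 2 * a * L := by
      rw [← mul_assoc]; exact mul_le_mul_of_nonneg_left hτL (by positivity)
    have h2 : 1 / (8 * a * τ) ≤ r ^ 2 / (8 * (a * τ)) := by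
      rw [mul_assoc]; exact div_le_div_of_nonneg_right (by nlinarith) (by positivity)
    have h3 : r ^ 2 / (8 * a * L) ≤ r ^ 2 / (8 * (a * τ)) := by
      rw [mul_assoc]; exact div_le_div_of_nonneg_left (by positivity) (by positivity) (by gcongr)
    linarith
  calc ‖∫ x in Iio r, exp x * phi μ σ ρ τ x r‖
      ≤ 8 * (τ / √(2 * a * π * τ ^ 3)) * exp (-(1 / (8 * a * τ))
          + (2 * β * r + β ^ 2 * a * L - r ^ 2 / (8 * a * L))) := by
        grw [norm_integral_Iio_exp_mul_phi_le ρ hμ hσ hτ (by linarith), hexpo]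
    _ = 8 * (τ / √(2 * a * π * τ ^ 3) * exp (-(1 / (8 * a * τ))))
          * exp (2 * β * r + β ^ 2 * a * L - r ^ 2 / (8 * a * L)) := by
        rw [exp_add]; ring
    _ ≤ 8 * exp (2 * β * r + β ^ 2 * a * L - r ^ 2 / (8 * a * L)) := by
        grw [div_sqrt_mul_exp_neg_inv_le ha hτ, mul_one]

lemma norm_integral_Iio_exp_mul_phi_mul_le (μ σ ρ : ℝ) {s τ r c M : ℝ} (hρ : 0 ≤ ρ) (hs : 0 ≤ s)
    (hc : ‖c‖ ≤ M) :
    ‖∫ x in Iio r, exp (-ρ * s + x) * phi μ σ ρ τ x r * c‖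
      ≤ M * ‖∫ x in Iio r, exp x * phi μ σ ρ τ x r‖ := by
  have hfactor : ∫ x in Iio r, exp (-ρ * s + x) * phi μ σ ρ τ x r * c
      = exp (-ρ * s) * c * ∫ x in Iio r, exp x * phi μ σ ρ τ x r := by
    rw [← integral_const_mul]
    refine integral_congr_ae (Eventually.of_forall fun x => ?_)
    simp only [exp_add]
    ring
  have hdecay : ‖exp (-ρ * s)‖ ≤ 1 := by
    rw [norm_of_nonneg (exp_pos _).le, exp_le_one_iff, neg_mul, neg_nonpos]
    exact mul_nonneg hρ hs
  rw [hfactor, norm_mul, norm_mul]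
  grw [hdecay, hc, one_mul]

theorem stmt_7_general (μ σ ρ t T : ℝ) (hμ : 0 < μ) (hσ : 0 < σ) (hρ : 0 < ρ)
    (ht : 0 ≤ t) (htT : t < T) (f : ℝ → ℝ)
    (hf : ContinuousOn f (Set.Icc 0 T)) :
    Filter.Tendsto
      (fun r : ℝ => ∫ s in t..T, ∫ x in Set.Iio r,
        Real.exp (-ρ*s + x) * phi μ σ ρ (s-t) x r * f s)
      Filter.atTop (nhds 0) := by
  obtain ⟨M, hM⟩ := isCompact_Icc.exists_bound_of_continuousOn hf
  set β := phiRate μ σ ρ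
  set a := phiVar μ σ
  have hinner : ∀ r, 1 ≤ r → ∀ s ∈ Ι t T,
      ‖∫ x in Iio r, exp (-ρ * s + x) * phi μ σ ρ (s - t) x r * f s‖
        ≤ M * (8 * exp (2 * β * r + β ^ 2 * a * (T - t) - r ^ 2 / (8 * a * (T - t)))) := by
    intro r hr s hs
    rw [uIoc_of_le htT.le] at hs
    have hfs : ‖f s‖ ≤ M := hM s ⟨ht.trans hs.1.le, hs.2⟩
    grw [norm_integral_Iio_exp_mul_phi_mul_le μ σ ρ hρ.le (ht.trans hs.1.le) hfs,
      norm_integral_Iio_exp_mul_phi_le_of_le ρ hμ.ne' hσ.ne' (sub_pos.mpr hs.1)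
        (sub_le_sub_right hs.2 t) hr]
    exact (norm_nonneg _).trans hfs
  have ha : 0 < a := phiVar_pos hμ.ne' hσ.ne'
  have hL : 0 < T - t := sub_pos.mpr htT
  have hbound := tendsto_exp_mul_add_sub_sq_div (2 * β) (β ^ 2 * a * (T - t))
    (c := 8 * a * (T - t)) (by positivity)
  refine squeeze_zero_norm' ((eventually_ge_atTop 1).mono fun r hr =>
    intervalIntegral.norm_integral_le_of_norm_le_const (hinner r hr)) ?_
  simpa using ((hbound.const_mul 8).const_mul M).mul_const |T - t|

/-- The vanishing limit
`lim_{r→∞} ∫_t^T ∫_{−∞}^r e^{−ρs+x} φ(s−t,x,r) f(s) dx ds = 0`. -/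
theorem stmt_7 (μ σ ρ t T : ℝ) (hμ : 0 < μ) (hσ : 0 < σ) (hρ : 0 < ρ)
    (ht : 0 ≤ t) (htT : t < T) (f : ℝ → ℝ)
    (hf : ContinuousOn f (Set.Icc 0 T))
    (hfnonneg : ∀ s ∈ Set.Icc (0:ℝ) T, 0 ≤ f s) :
    Filter.Tendsto
      (fun r : ℝ => ∫ s in t..T, ∫ x in Set.Iio r,
        Real.exp (-ρ*s + x) * phi μ σ ρ (s-t) x r * f s)
      Filter.atTop (nhds 0) :=
  stmt_7_general μ σ ρ t T hμ hσ hρ ht htT f hf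
end

section
/- Let μ, σ, ρ > 0, let 0 ≤ t < T, and let f : [0,T] → ℝ be continuous with f(s) ≥ 0 for all s ∈ [0,T]. Then there exists a constant C > 0 such that for all r > 2, ∫_t^T ∫_{−∞}^r e^{−ρs + x} φ(s−t, x, r) f(s) dx ds ≤ C · r · exp( (μ̃/σ̃) r + r − (r² − 1)/(2σ̃²(T−t)) ). -/
/-!
Put `u = s - t`, `y = r - x`, `A = σ̃²`, `c = 1 + μ̃/σ̃`. Since `(2r - x)² = r² + 2ry + y²` and
`c y + y²/(4Au) ≥ -c²Au` (completing the square), the exponent of `e^{-ρs+x} φ(u,x,r)` is at most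
`c r + c²A(T-t) - r²/(2A(T-t)) - ry/(Au) - y²/(4Au)`. Splitting the prefactor `2r - x = r + y`,
the `x`-integral is then bounded by `e^{…} u^{-3/2} (r · Au/r + 2Au)`, i.e. by a multiple of
`u^{-1/2}`, and `∫₀^{T-t} u^{-1/2} du = 2√(T-t)`.
-/

open MeasureTheory Set Filter Real

section HalfLine

variable {F g : ℝ → ℝ} {c : ℝ}

lemma integral_eq_sub_of_hasDerivAt_of_continuous (hF : ∀ x, HasDerivAt F (g x) x)
    (hg : Continuous g) (a b : ℝ) : ∫ x in a..b, g x = F b - F a :=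
  intervalIntegral.integral_eq_sub_of_hasDerivAt (fun x _ => hF x) (hg.intervalIntegrable a b)

lemma integrableOn_Iic_of_hasDerivAt_of_nonneg (hF : ∀ x, HasDerivAt F (g x) x)
    (hg : Continuous g) (hg0 : ∀ x ≤ c, 0 ≤ g x) (hF0 : ∀ x ≤ c, 0 ≤ F x) :
    IntegrableOn g (Iic c) := by
  refine integrableOn_Iic_of_intervalIntegral_norm_bounded (F c) c
    (fun _ => hg.integrableOn_Ioc) tendsto_id ?_
  filter_upwards [Iic_mem_atBot c] with y hy
  have hnorm : ∫ x in y..c, ‖g x‖ = ∫ x in y..c, g x :=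
    intervalIntegral.integral_congr fun x hx => by
      rw [uIcc_of_le hy] at hx
      exact norm_of_nonneg (hg0 x hx.2)
  rw [id, hnorm, integral_eq_sub_of_hasDerivAt_of_continuous hF hg]
  linarith [hF0 y hy]

lemma setIntegral_Iic_le_of_hasDerivAt_of_nonneg (hF : ∀ x, HasDerivAt F (g x) x)
    (hg : Continuous g) (hg0 : ∀ x ≤ c, 0 ≤ g x) (hF0 : ∀ x ≤ c, 0 ≤ F x) :
    ∫ x in Iic c, g x ≤ F c := by
  refine le_of_tendsto (intervalIntegral_tendsto_integral_Iic c
    (integrableOn_Iic_of_hasDerivAt_of_nonneg hF hg hg0 hF0) tendsto_id) ?_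
  filter_upwards [Iic_mem_atBot c] with y hy
  rw [id, integral_eq_sub_of_hasDerivAt_of_continuous hF hg]
  linarith [hF0 y hy]

end HalfLine

section ExplicitPrimitives

variable {b : ℝ}

lemma hasDerivAt_exp_mul_sub_div (hb : b ≠ 0) (c x : ℝ) :
    HasDerivAt (fun x => exp (b * (x - c)) / b) (exp (b * (x - c))) x := by
  have h := ((((hasDerivAt_id' x).sub_const c).const_mul b).exp).div_const b
  exact h.congr_deriv (by field_simp)

lemma hasDerivAt_exp_neg_mul_sub_sq_div (hb : b ≠ 0) (c x : ℝ) :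
    HasDerivAt (fun x => exp (-(b * (c - x) ^ 2)) / (2 * b))
      ((c - x) * exp (-(b * (c - x) ^ 2))) x := by
  have hsq : HasDerivAt (fun x => -(b * (c - x) ^ 2)) (2 * b * (c - x)) x := by
    refine ((((hasDerivAt_id' x).const_sub c).fun_pow 2).const_mul b).fun_neg.congr_deriv ?_
    norm_num; ring
  exact (hsq.exp.div_const (2 * b)).congr_deriv (by field_simp)

variable (hb : 0 < b) (c : ℝ)
include hb

lemma integrableOn_Iic_exp_mul_sub : IntegrableOn (fun x => exp (b * (x - c))) (Iic c) :=
  integrableOn_Iic_of_hasDerivAt_of_nonneg (hasDerivAt_exp_mul_sub_div hb.ne' c)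
    (by fun_prop) (fun x _ => (exp_pos _).le) (fun x _ => by positivity)

lemma setIntegral_Iic_exp_mul_sub_le : ∫ x in Iic c, exp (b * (x - c)) ≤ 1 / b := by
  simpa using setIntegral_Iic_le_of_hasDerivAt_of_nonneg (hasDerivAt_exp_mul_sub_div hb.ne' c)
    (by fun_prop) (fun x _ => (exp_pos _).le) (fun x _ => by positivity) (c := c)

lemma integrableOn_Iic_sub_mul_exp_neg_mul_sq :
    IntegrableOn (fun x => (c - x) * exp (-(b * (c - x) ^ 2))) (Iic c) :=
  integrableOn_Iic_of_hasDerivAt_of_nonneg (hasDerivAt_exp_neg_mul_sub_sq_div hb.ne' c)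
    (by fun_prop) (fun x hx => mul_nonneg (sub_nonneg.2 hx) (exp_pos _).le)
    (fun x _ => by positivity)

lemma setIntegral_Iic_sub_mul_exp_neg_mul_sq_le :
    ∫ x in Iic c, (c - x) * exp (-(b * (c - x) ^ 2)) ≤ 1 / (2 * b) := by
  simpa using setIntegral_Iic_le_of_hasDerivAt_of_nonneg
    (hasDerivAt_exp_neg_mul_sub_sq_div hb.ne' c) (by fun_prop)
    (fun x hx => mul_nonneg (sub_nonneg.2 hx) (exp_pos _).le) (fun x _ => by positivity) (c := c)

end ExplicitPrimitives

noncomputable def tailMajorant (b₁ b₂ r x : ℝ) : ℝ :=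
  r * exp (b₁ * (x - r)) + (r - x) * exp (-(b₂ * (r - x) ^ 2))

section TailMajorant

variable {b₁ b₂ r : ℝ}

lemma integrableOn_Iic_tailMajorant (hb₁ : 0 < b₁) (hb₂ : 0 < b₂) :
    IntegrableOn (tailMajorant b₁ b₂ r) (Iic r) :=
  ((integrableOn_Iic_exp_mul_sub hb₁ r).const_mul r).add
    (integrableOn_Iic_sub_mul_exp_neg_mul_sq hb₂ r)

lemma setIntegral_Iic_tailMajorant_le (hr : 0 ≤ r) (hb₁ : 0 < b₁) (hb₂ : 0 < b₂) :
    ∫ x in Iic r, tailMajorant b₁ b₂ r x ≤ r / b₁ + 1 / (2 * b₂) := by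
  unfold tailMajorant
  rw [integral_add ((integrableOn_Iic_exp_mul_sub hb₁ r).const_mul r)
    (integrableOn_Iic_sub_mul_exp_neg_mul_sq hb₂ r), integral_const_mul, ← mul_one_div]
  gcongr
  · exact setIntegral_Iic_exp_mul_sub_le hb₁ r
  · exact setIntegral_Iic_sub_mul_exp_neg_mul_sq_le hb₂ r

lemma sub_mul_exp_le_tailMajorant {x : ℝ} (hb₁ : 0 ≤ b₁) (hb₂ : 0 ≤ b₂) (hr : 0 ≤ r)
    (hx : x ≤ r) :
    (2 * r - x) * exp (b₁ * (x - r) - b₂ * (r - x) ^ 2) ≤ tailMajorant b₁ b₂ r x := by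
  have h₁ : exp (b₁ * (x - r)) ≤ 1 := exp_le_one_iff.2 (by nlinarith)
  have h₂ : exp (-(b₂ * (r - x) ^ 2)) ≤ 1 := exp_le_one_iff.2 (by nlinarith [sq_nonneg (r - x)])
  have hsplit : (2 * r - x) * exp (b₁ * (x - r) - b₂ * (r - x) ^ 2)
      = r * exp (b₁ * (x - r)) * exp (-(b₂ * (r - x) ^ 2))
        + (r - x) * exp (-(b₂ * (r - x) ^ 2)) * exp (b₁ * (x - r)) := by
    rw [sub_eq_add_neg (b₁ * (x - r)), exp_add]; ring
  rw [hsplit, tailMajorant]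
  exact add_le_add (mul_le_of_le_one_right (by positivity) h₂)
    (mul_le_of_le_one_right (mul_nonneg (sub_nonneg.2 hx) (exp_pos _).le) h₁)

end TailMajorant

lemma phi_nonneg {μ σ ρ s x y : ℝ} (hx : x ≤ 2 * y) : 0 ≤ phi μ σ ρ s x y := by
  unfold phi
  have : 0 ≤ 2 * (2 * y - x) := by linarith
  positivity

lemma mul_sub_sq_div_le_s9 {A u L c r x : ℝ} (hA : 0 < A) (hu : 0 < u) (huL : u ≤ L) :
    c * x - (2 * r - x) ^ 2 / (2 * A * u)
      ≤ c * r + c ^ 2 * A * L - r ^ 2 / (2 * A * L)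
        + (r / (A * u) * (x - r) - 1 / (4 * A * u) * (r - x) ^ 2) := by
  have hAu : 0 < A * u := mul_pos hA hu
  have hsplit : (2 * r - x) ^ 2 / (2 * A * u)
      = r ^ 2 / (2 * A * u) + r / (A * u) * (r - x) + 2 * (1 / (4 * A * u) * (r - x) ^ 2) := by
    field_simp; ring
  have hsquare : 0 ≤ c ^ 2 * A * u + c * (r - x) + 1 / (4 * A * u) * (r - x) ^ 2 := by
    have : c ^ 2 * A * u + c * (r - x) + 1 / (4 * A * u) * (r - x) ^ 2
        = (2 * c * (A * u) + (r - x)) ^ 2 / (4 * (A * u)) := by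
      field_simp; ring
    rw [this]; positivity
  have hcL : c ^ 2 * A * u ≤ c ^ 2 * A * L := by gcongr
  have hrL : r ^ 2 / (2 * A * L) ≤ r ^ 2 / (2 * A * u) := by gcongr
  nlinarith

section Kernel

variable {μ σ ρ μt σt : ℝ} (hμt : μt = μ / (2 * σ) - σ * ρ / μ) (hσt : σt = -(μ / σ))
include hμt hσt

lemma phi_eq (s x y : ℝ) :
    phi μ σ ρ s x y = 2 * (2 * y - x) / (σt ^ 2 * √(2 * σt ^ 2 * π * s ^ 3)) *
      exp (μt / σt * x - 1 / 2 * μt ^ 2 * s - (2 * y - x) ^ 2 / (2 * σt ^ 2 * s)) := by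
  subst hμt hσt; rfl

lemma exp_mul_phi_le_tailMajorant (hσt0 : σt ≠ 0) (hρ : 0 ≤ ρ) {s u L r x : ℝ} (hs : 0 ≤ s)
    (hu : 0 < u) (huL : u ≤ L) (hr : 0 ≤ r) (hx : x ≤ r) :
    exp (-ρ * s + x) * phi μ σ ρ u x r
      ≤ 2 * exp ((1 + μt / σt) * r + (1 + μt / σt) ^ 2 * σt ^ 2 * L - r ^ 2 / (2 * σt ^ 2 * L))
          / (σt ^ 2 * √(2 * σt ^ 2 * π * u ^ 3))
        * tailMajorant (r / (σt ^ 2 * u)) (1 / (4 * σt ^ 2 * u)) r x := by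
  rw [phi_eq hμt hσt]
  set A := σt ^ 2
  set c := 1 + μt / σt
  set R := c * r + c ^ 2 * A * L - r ^ 2 / (2 * A * L)
  have hA : 0 < A := by positivity
  have hexponent : -ρ * s + x + (μt / σt * x - 1 / 2 * μt ^ 2 * u - (2 * r - x) ^ 2 / (2 * A * u))
      ≤ R + (r / (A * u) * (x - r) - 1 / (4 * A * u) * (r - x) ^ 2) := by
    have := mul_sub_sq_div_le_s9 (c := c) (r := r) (x := x) hA hu huL
    have hcx : c * x = x + μt / σt * x := by ring
    nlinarith [mul_nonneg hρ hs, mul_nonneg (sq_nonneg μt) hu.le]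
  have h2rx : 0 ≤ 2 * r - x := by linarith
  calc exp (-ρ * s + x) * (2 * (2 * r - x) / (A * √(2 * A * π * u ^ 3))
        * exp (μt / σt * x - 1 / 2 * μt ^ 2 * u - (2 * r - x) ^ 2 / (2 * A * u)))
      = 2 / (A * √(2 * A * π * u ^ 3)) * ((2 * r - x)
        * exp (-ρ * s + x + (μt / σt * x - 1 / 2 * μt ^ 2 * u - (2 * r - x) ^ 2 / (2 * A * u)))) := by
        rw [exp_add (-ρ * s + x)]; ring
    _ ≤ 2 / (A * √(2 * A * π * u ^ 3)) * ((2 * r - x)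
        * exp (R + (r / (A * u) * (x - r) - 1 / (4 * A * u) * (r - x) ^ 2))) := by gcongr
    _ = 2 * exp R / (A * √(2 * A * π * u ^ 3)) * ((2 * r - x)
        * exp (r / (A * u) * (x - r) - 1 / (4 * A * u) * (r - x) ^ 2)) := by
        rw [exp_add]; ring
    _ ≤ _ := by
        gcongr
        exact sub_mul_exp_le_tailMajorant (by positivity) (by positivity) hr hx

lemma integral_exp_mul_phi_le (hσt0 : σt ≠ 0) (hρ : 0 ≤ ρ) {s u L r : ℝ} (hs : 0 ≤ s)
    (hu : 0 < u) (huL : u ≤ L) (hr : 0 < r) :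
    ∫ x in Iio r, exp (-ρ * s + x) * phi μ σ ρ u x r
      ≤ 6 * exp ((1 + μt / σt) * r + (1 + μt / σt) ^ 2 * σt ^ 2 * L - r ^ 2 / (2 * σt ^ 2 * L))
          / (√(2 * σt ^ 2 * π) * √u) := by
  set A := σt ^ 2
  set E := exp ((1 + μt / σt) * r + (1 + μt / σt) ^ 2 * A * L - r ^ 2 / (2 * A * L))
  have hA : 0 < A := by positivity
  have hb₁ : 0 < r / (A * u) := by positivity
  have hb₂ : 0 < 1 / (4 * A * u) := by positivity
  have hsqrt : √(2 * A * π * u ^ 3) = √(2 * A * π) * (u * √u) := by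
    rw [sqrt_mul (by positivity), show u ^ 3 = u ^ 2 * u by ring, sqrt_mul (sq_nonneg u),
      sqrt_sq hu.le]
  calc ∫ x in Iio r, exp (-ρ * s + x) * phi μ σ ρ u x r
      ≤ ∫ x in Iio r, 2 * E / (A * √(2 * A * π * u ^ 3))
          * tailMajorant (r / (A * u)) (1 / (4 * A * u)) r x := by
        refine integral_mono_of_nonneg ?_ ?_ ?_
        · exact ae_restrict_of_forall_mem measurableSet_Iio fun x hx =>
            mul_nonneg (exp_pos _).le (phi_nonneg (by linarith [mem_Iio.1 hx]))
        · exact IntegrableOn.mono_set ((integrableOn_Iic_tailMajorant hb₁ hb₂).const_mul _)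
            Iio_subset_Iic_self
        · exact ae_restrict_of_forall_mem measurableSet_Iio fun x hx =>
            exp_mul_phi_le_tailMajorant hμt hσt hσt0 hρ hs hu huL hr.le (mem_Iio.1 hx).le
    _ = 2 * E / (A * √(2 * A * π * u ^ 3))
          * ∫ x in Iic r, tailMajorant (r / (A * u)) (1 / (4 * A * u)) r x := by
        rw [integral_const_mul, setIntegral_congr_set Iio_ae_eq_Iic]
    _ ≤ 2 * E / (A * √(2 * A * π * u ^ 3)) * (r / (r / (A * u)) + 1 / (2 * (1 / (4 * A * u)))) := by
        gcongr
        exact setIntegral_Iic_tailMajorant_le hr.le hb₁ hb₂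
    _ = 6 * E / (√(2 * A * π) * √u) := by
        rw [hsqrt]
        have hsqrt_pos : 0 < √u := sqrt_pos.2 hu
        field_simp
        ring

end Kernel

lemma intervalIntegral_le_of_le_div_sqrt_sub {F : ℝ → ℝ} {K t T : ℝ} (htT : t ≤ T)
    (hF0 : ∀ s ∈ Ioc t T, 0 ≤ F s) (hF : ∀ s ∈ Ioc t T, F s ≤ K / √(s - t)) :
    ∫ s in t..T, F s ≤ 2 * K * √(T - t) := by
  have hrpow : ∀ s ∈ Ioc t T, K / √(s - t) = K * (s - t) ^ (-(1 / 2) : ℝ) := fun s hs => by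
    rw [rpow_neg (sub_nonneg.2 hs.1.le), ← sqrt_eq_rpow, div_eq_mul_inv]
  have hint : IntervalIntegrable (fun s => K * (s - t) ^ (-(1 / 2) : ℝ)) volume t T := by
    have := ((intervalIntegral.intervalIntegrable_rpow' (by norm_num : (-1 : ℝ) < -(1 / 2))
      (a := 0) (b := T - t)).comp_sub_right t).const_mul K
    simpa using this
  have hbound : ∫ s in t..T, K * (s - t) ^ (-(1 / 2) : ℝ) = 2 * K * √(T - t) := by
    rw [intervalIntegral.integral_const_mul, intervalIntegral.integral_comp_sub_right
      (fun s => s ^ (-(1 / 2) : ℝ)), sub_self, integral_rpow (by norm_num), sqrt_eq_rpow]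
    norm_num
    ring
  rw [intervalIntegral.integral_of_le htT, ← hbound, intervalIntegral.integral_of_le htT]
  refine integral_mono_of_nonneg (ae_restrict_of_forall_mem measurableSet_Ioc hF0)
    ((intervalIntegrable_iff_integrableOn_Ioc_of_le htT).1 hint)
    (ae_restrict_of_forall_mem measurableSet_Ioc fun s hs => (hF s hs).trans_eq (hrpow s hs))

/-- The Gaussian-tail bound: there is a constant `C > 0` such that for all
`r > 2`, `∫_t^T ∫_{−∞}^r e^{−ρs+x} φ(s−t,x,r) f(s) dx ds
  ≤ C r exp((μ̃/σ̃) r + r − (r²−1)/(2σ̃²(T−t)))`. -/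
theorem stmt_9 (μ σ ρ t T : ℝ) (hμ : 0 < μ) (hσ : 0 < σ) (hρ : 0 < ρ)
    (ht : 0 ≤ t) (htT : t < T) (f : ℝ → ℝ)
    (hf : ContinuousOn f (Set.Icc 0 T))
    (hfnonneg : ∀ s ∈ Set.Icc (0:ℝ) T, 0 ≤ f s)
    (μt σt : ℝ) (hμt : μt = μ/(2*σ) - σ*ρ/μ) (hσt : σt = -(μ/σ)) :
    ∃ C : ℝ, 0 < C ∧ ∀ r : ℝ, 2 < r →
      (∫ s in t..T, ∫ x in Set.Iio r, Real.exp (-ρ*s + x) * phi μ σ ρ (s-t) x r * f s)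
        ≤ C * r * Real.exp ((μt/σt)*r + r - (r^2 - 1)/(2*σt^2*(T-t))) := by
  have hσt0 : σt ≠ 0 := by rw [hσt]; exact neg_ne_zero.2 (div_pos hμ hσ).ne'
  obtain ⟨M, hM⟩ := isCompact_Icc.exists_bound_of_continuousOn hf
  have hM0 : 0 ≤ M := (norm_nonneg _).trans (hM T ⟨ht.trans htT.le, le_rfl⟩)
  set L := T - t
  set c := 1 + μt / σt
  set C₀ := 12 * M * √L * exp (c ^ 2 * σt ^ 2 * L) / √(2 * σt ^ 2 * π)
  refine ⟨C₀ + 1, by positivity, fun r hr => ?_⟩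
  set K := M * (6 * exp (c * r + c ^ 2 * σt ^ 2 * L - r ^ 2 / (2 * σt ^ 2 * L))
    / √(2 * σt ^ 2 * π))
  have hinner : ∀ s ∈ Ioc t T,
      ∫ x in Iio r, exp (-ρ * s + x) * phi μ σ ρ (s - t) x r * f s ≤ K / √(s - t) := by
    intro s hs
    have hs0 : 0 ≤ s := ht.trans hs.1.le
    have hfs : f s ≤ M := (le_abs_self _).trans (hM s ⟨hs0, hs.2⟩)
    rw [integral_mul_const]
    calc _ ≤ 6 * exp (c * r + c ^ 2 * σt ^ 2 * L - r ^ 2 / (2 * σt ^ 2 * L))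
          / (√(2 * σt ^ 2 * π) * √(s - t)) * M :=
          mul_le_mul (integral_exp_mul_phi_le hμt hσt hσt0 hρ.le hs0 (sub_pos.2 hs.1)
            (by linarith [hs.2]) (by linarith)) hfs (hfnonneg s ⟨hs0, hs.2⟩) (by positivity)
      _ = K / √(s - t) := by ring
  have hnonneg : ∀ s ∈ Ioc t T,
      0 ≤ ∫ x in Iio r, exp (-ρ * s + x) * phi μ σ ρ (s - t) x r * f s := fun s hs =>
    setIntegral_nonneg measurableSet_Iio fun x hx =>
      mul_nonneg (mul_nonneg (exp_pos _).le (phi_nonneg (by linarith [mem_Iio.1 hx])))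
        (hfnonneg s ⟨ht.trans hs.1.le, hs.2⟩)
  calc _ ≤ 2 * K * √L := intervalIntegral_le_of_le_div_sqrt_sub htT.le hnonneg hinner
    _ = C₀ * exp (μt / σt * r + r - r ^ 2 / (2 * σt ^ 2 * L)) := by
        simp only [K, C₀]
        rw [show c * r + c ^ 2 * σt ^ 2 * L - r ^ 2 / (2 * σt ^ 2 * L)
          = c ^ 2 * σt ^ 2 * L + (μt / σt * r + r - r ^ 2 / (2 * σt ^ 2 * L)) by ring, exp_add]
        ring
    _ ≤ C₀ * exp (μt / σt * r + r - (r ^ 2 - 1) / (2 * σt ^ 2 * L)) := by gcongr; linarith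
    _ ≤ (C₀ + 1) * r * exp (μt / σt * r + r - (r ^ 2 - 1) / (2 * σt ^ 2 * L)) := by
        gcongr
        nlinarith [show 0 ≤ C₀ by positivity]
end

section
/- Let ρ > 0 and 0 ≤ t < T, and let L₁, L₂ : [t,T] → ℝ be nondecreasing continuous functions with L₁(t) = L₂(t) = 0. Then | ∫_{(t,T]} e^{−ρ(s−t)} dL₁(s) − ∫_{(t,T]} e^{−ρ(s−t)} dL₂(s) | ≤ (1 + ρ(T−t)) · sup_{s∈[t,T]} |L₁(s) − L₂(s)|, where the integrals are Lebesgue–Stieltjes integrals with respect to the measures induced by L₁ and L₂. -/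
/-!
Integration by parts against a Stieltjes measure: writing `f s = f b - ∫_{(s,b]} f'` and
applying Fubini on the triangle `s ≤ u` gives
`∫_{(a,b]} f dL = f b (L b - L a) - ∫_{(a,b]} f' u (L u - L a) du`.
For `f s = exp (-ρ (s - t))` and `L₁ t = L₂ t`, the difference of the two costs is therefore
`f T (L₁ T - L₂ T) - ∫ f' (L₁ - L₂)`; since `0 < f ≤ 1` and `|f'| ≤ ρ` on `[t, T]`, this is at
most `M + ρ (T - t) M`, where `M` is the uniform distance of `L₁` and `L₂`.
-/

open MeasureTheory Set Real

lemma Monotone.bddAbove_abs_sub_image_Icc {α : Type*} [Preorder α] {f g : α → ℝ}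
    (hf : Monotone f) (hg : Monotone g) (a b : α) :
    BddAbove ((fun s => |f s - g s|) '' Icc a b) := by
  refine ⟨max (f b - g a) (g b - f a), ?_⟩
  rintro _ ⟨s, hs, rfl⟩
  have := hf hs.1; have := hf hs.2; have := hg hs.1; have := hg hs.2
  rw [abs_sub_le_iff]
  constructor <;> linarith [le_max_left (f b - g a) (g b - f a),
    le_max_right (f b - g a) (g b - f a)]

theorem integral_Ioc_eq_sub_of_hasDerivAt {f f' : ℝ → ℝ} {a b : ℝ} (hab : a ≤ b)
    (hf : ∀ x ∈ Icc a b, HasDerivAt f (f' x) x) (hf' : IntegrableOn f' (Ioc a b)) :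
    ∫ u in Ioc a b, f' u = f b - f a := by
  rw [← intervalIntegral.integral_of_le hab]
  exact intervalIntegral.integral_eq_sub_of_hasDerivAt (fun x hx => hf x (uIcc_of_le hab ▸ hx))
    ((intervalIntegrable_iff_integrableOn_Ioc_of_le hab).2 hf')

namespace StieltjesFunction

variable (L : StieltjesFunction ℝ)

lemma measureReal_Ioc {a b : ℝ} (hab : a ≤ b) : L.measure.real (Ioc a b) = L b - L a := by
  rw [measureReal_def, L.measure_Ioc, ENNReal.toReal_ofReal (sub_nonneg.2 (L.mono hab))]

lemma integrableOn_mul_sub {g : ℝ → ℝ} {a b : ℝ} (hg : ContinuousOn g (Icc a b)) (c : ℝ) :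
    IntegrableOn (fun u => g u * (L u - c)) (Ioc a b) :=
  (((L.mono.locallyIntegrable.sub (locallyIntegrable_const c)).integrableOn_isCompact
    isCompact_Icc).continuousOn_mul hg isCompact_Icc).mono_set Ioc_subset_Icc_self

theorem integral_Ioc_eq_sub_integral_deriv_mul {f f' : ℝ → ℝ} {a b : ℝ} (hab : a ≤ b)
    (hf : ∀ x ∈ Ioc a b, HasDerivAt f (f' x) x) (hf' : IntegrableOn f' (Ioc a b)) :
    ∫ s in Ioc a b, f s ∂L.measure
      = f b * (L b - L a) - ∫ u in Ioc a b, f' u * (L u - L a) := by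
  have : IsFiniteMeasure (L.measure.restrict (Ioc a b)) :=
    isFiniteMeasure_restrict.2 measure_Ioc_lt_top.ne
  -- The closed triangle `s ≤ u` makes the `s`-sections `(a, u]`, of measure `L u - L a`.
  set F : ℝ → ℝ → ℝ := fun s u => if s ≤ u then f' u else 0
  have hF : Integrable (Function.uncurry F)
      ((L.measure.restrict (Ioc a b)).prod (volume.restrict (Ioc a b))) := by
    have hF_eq : Function.uncurry F = {p : ℝ × ℝ | p.1 ≤ p.2}.indicator (fun p => f' p.2) := by
      funext ⟨s, u⟩
      simp [F, indicator]
    rw [hF_eq]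
    exact (hf'.comp_snd _).indicator (measurableSet_le measurable_fst measurable_snd)
  have integral_F_right : ∀ s ∈ Ioc a b, ∫ u in Ioc a b, F s u = f b - f s := by
    intro s hs
    have hFs : F s = (Ici s).indicator f' := by ext u; simp [F, indicator]
    have hIcc : Ioc a b ∩ Ici s = Icc s b := by
      ext u
      simp only [mem_inter_iff, mem_Ioc, mem_Ici, mem_Icc]
      grind [hs.1]
    rw [hFs, setIntegral_indicator measurableSet_Ici, hIcc, integral_Icc_eq_integral_Ioc]
    exact integral_Ioc_eq_sub_of_hasDerivAt hs.2 (fun x hx => hf x ⟨hs.1.trans_le hx.1, hx.2⟩)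
      (hf'.mono_set (Ioc_subset_Ioc_left hs.1.le))
  have integral_F_left : ∀ u ∈ Ioc a b,
      ∫ s in Ioc a b, F s u ∂L.measure = f' u * (L u - L a) := by
    intro u hu
    have hFu : (fun s => F s u) = (Iic u).indicator (fun _ => f' u) := by
      ext s; simp [F, indicator]
    rw [hFu, setIntegral_indicator measurableSet_Iic, Ioc_inter_Iic, inf_of_le_right hu.2,
      setIntegral_const, L.measureReal_Ioc hu.1.le, smul_eq_mul, mul_comm]
  have hF_left : Integrable (fun s => ∫ u in Ioc a b, F s u) (L.measure.restrict (Ioc a b)) :=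
    hF.integral_prod_left
  calc ∫ s in Ioc a b, f s ∂L.measure
      = ∫ s in Ioc a b, (f b - ∫ u in Ioc a b, F s u) ∂L.measure :=
        setIntegral_congr_fun measurableSet_Ioc fun s hs => by rw [integral_F_right s hs]; ring
    _ = f b * (L b - L a) - ∫ s in Ioc a b, (∫ u in Ioc a b, F s u) ∂L.measure := by
        rw [integral_sub (integrable_const _) hF_left, setIntegral_const,
          L.measureReal_Ioc hab, smul_eq_mul, mul_comm]
    _ = f b * (L b - L a) - ∫ u in Ioc a b, (∫ s in Ioc a b, F s u ∂L.measure) := by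
        rw [integral_integral_swap hF]
    _ = f b * (L b - L a) - ∫ u in Ioc a b, f' u * (L u - L a) := by
        rw [setIntegral_congr_fun measurableSet_Ioc integral_F_left]

theorem integral_Ioc_sub_integral_Ioc (L₁ L₂ : StieltjesFunction ℝ) {f f' : ℝ → ℝ} {a b : ℝ}
    (hab : a ≤ b) (hf : ∀ x ∈ Ioc a b, HasDerivAt f (f' x) x) (hf' : ContinuousOn f' (Icc a b))
    (ha : L₁ a = L₂ a) :
    (∫ s in Ioc a b, f s ∂L₁.measure) - ∫ s in Ioc a b, f s ∂L₂.measure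
      = f b * (L₁ b - L₂ b) - ∫ u in Ioc a b, f' u * (L₁ u - L₂ u) := by
  have hf'_int : IntegrableOn f' (Ioc a b) := hf'.integrableOn_Icc.mono_set Ioc_subset_Icc_self
  rw [L₁.integral_Ioc_eq_sub_integral_deriv_mul hab hf hf'_int,
    L₂.integral_Ioc_eq_sub_integral_deriv_mul hab hf hf'_int, ha]
  have hdiff : (∫ u in Ioc a b, f' u * (L₁ u - L₂ a)) - ∫ u in Ioc a b, f' u * (L₂ u - L₂ a)
      = ∫ u in Ioc a b, f' u * (L₁ u - L₂ u) := by
    rw [← integral_sub (L₁.integrableOn_mul_sub hf' _) (L₂.integrableOn_mul_sub hf' _)]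
    congr 1 with u
    ring
  rw [← hdiff]
  ring

end StieltjesFunction

theorem stmt_10_general (ρ t T : ℝ) (hρ : 0 < ρ) (htT : t < T)
    (L₁ L₂ : StieltjesFunction ℝ)
    (hL₁t : L₁ t = 0) (hL₂t : L₂ t = 0) :
    |(∫ s in Set.Ioc t T, Real.exp (-ρ*(s-t)) ∂L₁.measure)
        - ∫ s in Set.Ioc t T, Real.exp (-ρ*(s-t)) ∂L₂.measure|
      ≤ (1 + ρ*(T-t)) * sSup ((fun s => |L₁ s - L₂ s|) '' Set.Icc t T) := by
  set M := sSup ((fun s => |L₁ s - L₂ s|) '' Icc t T)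
  have hM : ∀ s ∈ Icc t T, |L₁ s - L₂ s| ≤ M := fun s hs =>
    le_csSup (L₁.mono.bddAbove_abs_sub_image_Icc L₂.mono t T) ⟨s, hs, rfl⟩
  have hexp_mul_le : ∀ s ∈ Icc t T, exp (-ρ * (s - t)) * |L₁ s - L₂ s| ≤ M := fun s hs =>
    (mul_le_of_le_one_left (abs_nonneg _) (exp_le_one_iff.2 (by nlinarith [hs.1]))).trans
      (hM s hs)
  have hderiv : ∀ s, HasDerivAt (fun s => exp (-ρ * (s - t))) (-ρ * exp (-ρ * (s - t))) s :=
    fun s => by simpa [mul_comm] using (((hasDerivAt_id s).sub_const t).const_mul (-ρ)).exp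
  have hboundary : |exp (-ρ * (T - t)) * (L₁ T - L₂ T)| ≤ M := by
    rw [abs_mul, abs_of_pos (exp_pos _)]
    exact hexp_mul_le T ⟨htT.le, le_rfl⟩
  have hintegral :
      |∫ u in Ioc t T, -ρ * exp (-ρ * (u - t)) * (L₁ u - L₂ u)| ≤ ρ * M * (T - t) := by
    rw [← norm_eq_abs, ← volume_real_Ioc_of_le htT.le]
    refine norm_setIntegral_le_of_norm_le_const measure_Ioc_lt_top fun u hu => ?_
    rw [norm_eq_abs, abs_mul, abs_mul, abs_neg, abs_of_pos hρ, abs_of_pos (exp_pos _),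
      mul_assoc]
    exact mul_le_mul_of_nonneg_left (hexp_mul_le u (Ioc_subset_Icc_self hu)) hρ.le
  rw [StieltjesFunction.integral_Ioc_sub_integral_Ioc L₁ L₂ htT.le (fun s _ => hderiv s)
    (by fun_prop) (hL₁t.trans hL₂t.symm)]
  calc _ ≤ M + ρ * M * (T - t) := (abs_sub _ _).trans (add_le_add hboundary hintegral)
    _ = (1 + ρ * (T - t)) * M := by ring

/-- The discounted Stieltjes costs of two nondecreasing continuous
"local time" processes starting at `0` differ by at most `(1 + ρ(T−t))` times their uniform
distance on `[t,T]`. -/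
theorem stmt_10 (ρ t T : ℝ) (hρ : 0 < ρ) (ht : 0 ≤ t) (htT : t < T)
    (L₁ L₂ : StieltjesFunction ℝ)
    (hL₁cont : ContinuousOn L₁ (Set.Icc t T))
    (hL₂cont : ContinuousOn L₂ (Set.Icc t T))
    (hL₁t : L₁ t = 0) (hL₂t : L₂ t = 0) :
    |(∫ s in Set.Ioc t T, Real.exp (-ρ*(s-t)) ∂L₁.measure)
        - ∫ s in Set.Ioc t T, Real.exp (-ρ*(s-t)) ∂L₂.measure|
      ≤ (1 + ρ*(T-t)) * sSup ((fun s => |L₁ s - L₂ s|) '' Set.Icc t T) :=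
  stmt_10_general ρ t T hρ htT L₁ L₂ hL₁t hL₂t
end
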